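/- arXiv:1607.01525 — 4 statements merged into one kernel-verified Lean document; each statement's English description precedes it below -/
import Mathlib

section
/- (Directional monotonicity for the boundary sandpile) Let n > 0 and κ > 0, and let (V, u) be the stabilizing pair of BS(n·δ₀, κ), with u extended by 0 outside V. Then for every e ∈ 𝒩 and all X₁, X₂ ∈ ℤ^d such that X₁ − X₂ is a nonzero real multiple of e, if |X₁| ≤ |X₂| then u(X₁) ≥ u(X₂), where |·| is the Euclidean norm. -/
open Filter

namespace Sandpile

/-- Lattice sites of `ℤ^d`. -/
abbrev Site (d : ℕ) := Fin d → ℤ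

/-- Two sites are neighbours iff their `ℓ¹`-distance equals `1`. -/
def nbr {d : ℕ} (x y : Site d) : Prop := (∑ i, |x i - y i|) = 1

/-- The (combinatorial) boundary of a set `V ⊆ ℤ^d`. -/
def bdry {d : ℕ} (V : Set (Site d)) : Set (Site d) :=
  {x | x ∈ V ∧ ∃ y, nbr x y ∧ y ∉ V}

/-- The (combinatorial) interior of a set `V ⊆ ℤ^d`. -/
def intr {d : ℕ} (V : Set (Site d)) : Set (Site d) := V \ bdry V

/-- The discrete Laplacian `Δu(x) = (1/(2d)) ∑_{y ∼ x} (u y - u x)`; the `2d`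
neighbours of `x` are exactly the points `x ± eᵢ`. -/
noncomputable def lap {d : ℕ} (u : Site d → ℝ) (x : Site d) : ℝ :=
  (1 / (2 * (d : ℝ))) *
    ∑ i : Fin d, ((u (x + Pi.single i 1) - u x) + (u (x - Pi.single i 1) - u x))

/-- A mass distribution: nonnegative with finite support. -/
def IsMassDist {d : ℕ} (μ : Site d → ℝ) : Prop :=
  (∀ x, 0 ≤ μ x) ∧ (Function.support μ).Finite

/-- Euclidean norm of a lattice point. -/
noncomputable def enorm {d : ℕ} (x : Site d) : ℝ :=
  Real.sqrt (∑ i, ((x i : ℝ)) ^ 2)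

/-- `(V, u)` is a stabilizing pair for `BS(μ₀, κ)`: `V` is finite, contains the support
of `μ₀`, and `u : ℤ^d → [0,∞)` vanishes outside the interior of `V`, satisfies
`Δu = -μ₀` on the interior of `V`, `u = 0` on `∂V`, and `μ₀ + Δu ≤ κ` on `∂V`. -/
def IsStabilizingPair {d : ℕ} (μ0 : Site d → ℝ) (κ : ℝ)
    (V : Set (Site d)) (u : Site d → ℝ) : Prop :=
  V.Finite ∧ Function.support μ0 ⊆ V ∧ (∀ x, 0 ≤ u x) ∧
  (∀ x ∉ intr V, u x = 0) ∧
  (∀ x ∈ intr V, lap u x = -μ0 x) ∧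
  (∀ x ∈ bdry V, u x = 0) ∧
  (∀ x ∈ bdry V, μ0 x + lap u x ≤ κ)

/-- *The* stabilizing pair of `BS(μ₀, κ)`: a stabilizing pair whose set of sites is
contained in the set of any other stabilizing pair. -/
def IsMinStabilizingPair {d : ℕ} (μ0 : Site d → ℝ) (κ : ℝ)
    (V : Set (Site d)) (u : Site d → ℝ) : Prop :=
  IsStabilizingPair μ0 κ V u ∧
  ∀ V' u', IsStabilizingPair μ0 κ V' u' → V ⊆ V'

/-- The point mass `n·δ₀` at the origin. -/
def pointMass (d : ℕ) (n : ℝ) : Site d → ℝ := fun x => if x = 0 then n else 0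

/-- The set of directions `𝒩 = {eᵢ, eᵢ + eⱼ, eᵢ - eⱼ : 1 ≤ i ≠ j ≤ d}`. -/
def dirN (d : ℕ) : Set (Site d) :=
  {v | ∃ i j : Fin d, i ≠ j ∧
    (v = Pi.single i 1 ∨ v = Pi.single i 1 + Pi.single j 1 ∨
      v = Pi.single i 1 - Pi.single j 1)}

section Basic

variable {d : ℕ}

lemma nbr_symm {x y : Site d} (h : nbr x y) : nbr y x := by
  unfold nbr at *
  rw [← h]
  exact Finset.sum_congr rfl fun k _ => abs_sub_comm _ _

lemma add_single_eq_update (x : Site d) (k : Fin d) (s : ℤ) :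
    x + Pi.single k s = Function.update x k (x k + s) := by
  funext m
  by_cases h : m = k
  · subst h; simp
  · simp [Function.update_of_ne h, Pi.single_eq_of_ne h]

lemma sub_single_eq_update (x : Site d) (k : Fin d) (s : ℤ) :
    x - Pi.single k s = Function.update x k (x k - s) := by
  funext m
  by_cases h : m = k
  · subst h; simp
  · simp [Function.update_of_ne h, Pi.single_eq_of_ne h]

lemma nbr_update (x : Site d) (k : Fin d) {s : ℤ} (hs : s = 1 ∨ s = -1) :
    nbr x (Function.update x k (x k + s)) := by
  unfold nbr
  have : ∀ m : Fin d, |x m - Function.update x k (x k + s) m| = if m = k then 1 else 0 := by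
    intro m
    by_cases h : m = k
    · subst h
      simp only [Function.update_self, if_pos rfl]
      rcases hs with rfl | rfl <;> simp
    · simp [Function.update_of_ne h, h]
  rw [Finset.sum_congr rfl fun m _ => this m]
  simp

lemma nbr_char {x y : Site d} (h : nbr x y) :
    ∃ (k : Fin d) (s : ℤ), (s = 1 ∨ s = -1) ∧ y = Function.update x k (x k + s) := by
  unfold nbr at h
  have habs : ∀ m : Fin d, (0:ℤ) ≤ |x m - y m| := fun m => abs_nonneg _
  obtain ⟨k, _, hk⟩ : ∃ k ∈ Finset.univ, |x k - y k| ≠ 0 := by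
    by_contra hc
    push_neg at hc
    have : (∑ m, |x m - y m|) = 0 := Finset.sum_eq_zero fun m hm => hc m hm
    omega
  have hk1 : |x k - y k| = 1 := by
    have hle : |x k - y k| ≤ ∑ m, |x m - y m| :=
      Finset.single_le_sum (fun m _ => habs m) (Finset.mem_univ k)
    rw [h] at hle
    have h0 := habs k
    omega
  have hrest : ∀ m, m ≠ k → x m = y m := by
    intro m hm
    have hsplit := Finset.add_sum_erase Finset.univ (fun m => |x m - y m|) (Finset.mem_univ k)
    rw [h, hk1] at hsplit
    have hz : ∑ m ∈ Finset.univ.erase k, |x m - y m| = 0 := by omega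
    have hmz := (Finset.sum_eq_zero_iff_of_nonneg (fun m _ => habs m)).mp hz m
      (Finset.mem_erase.mpr ⟨hm, Finset.mem_univ m⟩)
    rw [abs_eq_zero, sub_eq_zero] at hmz
    exact hmz
  refine ⟨k, y k - x k, ?_, ?_⟩
  · rcases abs_eq (by norm_num : (0:ℤ) ≤ 1) |>.mp hk1 with h1 | h1 <;> omega
  · funext m
    by_cases hm : m = k
    · subst hm; simp
    · simp [Function.update_of_ne hm, hrest m hm]

lemma mem_intr {V : Set (Site d)} {x : Site d} :
    x ∈ intr V ↔ x ∈ V ∧ ∀ y, nbr x y → y ∈ V := by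
  unfold intr bdry
  constructor
  · rintro ⟨hx, hb⟩
    refine ⟨hx, fun y hy => ?_⟩
    by_contra hyV
    exact hb ⟨hx, y, hy, hyV⟩
  · rintro ⟨hx, hall⟩
    exact ⟨hx, fun hb => by obtain ⟨_, y, hy, hyV⟩ := hb; exact hyV (hall y hy)⟩

lemma nbr_add_single (x : Site d) (k : Fin d) : nbr x (x + Pi.single k 1) := by
  rw [add_single_eq_update]
  exact nbr_update x k (Or.inl rfl)

lemma nbr_sub_single (x : Site d) (k : Fin d) : nbr x (x - Pi.single k 1) := by
  have : x - Pi.single k 1 = Function.update x k (x k + (-1)) := by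
    rw [sub_single_eq_update, sub_eq_add_neg]
  rw [this]
  exact nbr_update x k (Or.inr rfl)

lemma lap_mono_at {f g : Site d → ℝ} {x : Site d}
    (hfg : ∀ y, nbr x y → f y ≤ g y) (hx : f x = g x) : lap f x ≤ lap g x := by
  unfold lap
  have hfac : (0:ℝ) ≤ 1 / (2 * (d:ℝ)) := by positivity
  apply mul_le_mul_of_nonneg_left _ hfac
  apply Finset.sum_le_sum
  intro k _
  have h1 := hfg _ (nbr_add_single x k)
  have h2 := hfg _ (nbr_sub_single x k)
  rw [hx] at *
  linarith

lemma lap_add (f g : Site d → ℝ) (x : Site d) :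
    lap (fun y => f y + g y) x = lap f x + lap g x := by
  unfold lap
  rw [← mul_add, ← Finset.sum_add_distrib]
  congr 1
  apply Finset.sum_congr rfl
  intros; ring

lemma lap_neg (f : Site d → ℝ) (x : Site d) :
    lap (fun y => -(f y)) x = -lap f x := by
  unfold lap
  rw [← mul_neg, ← Finset.sum_neg_distrib]
  congr 1
  apply Finset.sum_congr rfl
  intros; ring

lemma lap_sub (f g : Site d → ℝ) (x : Site d) :
    lap (fun y => f y - g y) x = lap f x - lap g x := by
  unfold lap
  rw [← mul_sub, ← Finset.sum_sub_distrib]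
  congr 1
  apply Finset.sum_congr rfl
  intros; ring

lemma lap_smul (c : ℝ) (f : Site d → ℝ) (x : Site d) :
    lap (fun y => c * f y) x = c * lap f x := by
  unfold lap
  have h : ∀ i : Fin d, ((fun y => c * f y) (x + Pi.single i 1) - (fun y => c * f y) x
      + ((fun y => c * f y) (x - Pi.single i 1) - (fun y => c * f y) x))
      = c * ((f (x + Pi.single i 1) - f x) + (f (x - Pi.single i 1) - f x)) := fun i => by ring
  rw [Finset.sum_congr rfl (fun i _ => h i), ← Finset.mul_sum]
  ring

end Basic
section MaxPrinciple

variable {d : ℕ}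

lemma maxPrinciple (hd : 0 < d) {S : Set (Site d)} {h : Site d → ℝ}
    (hfin : (Function.support h).Finite)
    (hlap : ∀ x ∈ S, 0 ≤ lap h x) (hout : ∀ x ∉ S, h x ≤ 0) : ∀ x, h x ≤ 0 := by
  by_contra hc
  push_neg at hc
  obtain ⟨x0, hx0⟩ := hc
  have hx0m : x0 ∈ hfin.toFinset := by
    simp [Function.mem_support]
    exact ne_of_gt hx0
  have hne : hfin.toFinset.Nonempty := ⟨x0, hx0m⟩
  set m := hfin.toFinset.sup' hne h with hm
  have hmpos : 0 < m := lt_of_lt_of_le hx0 (Finset.le_sup' h hx0m)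
  have hub : ∀ y, h y ≤ m := by
    intro y
    by_cases hy : h y = 0
    · rw [hy]; exact le_of_lt hmpos
    · exact Finset.le_sup' h (by simp [Function.mem_support, hy])
  obtain ⟨z0, _, hz0⟩ := Finset.exists_mem_eq_sup' hne h
  let i0 : Fin d := ⟨0, hd⟩
  have key : ∀ z, h z = m → h (z + Pi.single i0 1) = m := by
    intro z hz
    have hzS : z ∈ S := by
      by_contra hzS
      have := hout z hzS
      rw [hz] at this
      linarith
    have h1 := hlap z hzS
    have hfac : (0:ℝ) < 1 / (2 * (d:ℝ)) := by
      have : (0:ℝ) < (d:ℝ) := by exact_mod_cast hd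
      positivity
    have hsum : 0 ≤ ∑ k : Fin d, ((h (z + Pi.single k 1) - h z) + (h (z - Pi.single k 1) - h z)) := by
      by_contra hneg
      push_neg at hneg
      have := mul_neg_of_pos_of_neg hfac hneg
      unfold lap at h1
      linarith
    have hterm : ∀ k ∈ Finset.univ, ((h (z + Pi.single k 1) - h z) + (h (z - Pi.single k 1) - h z)) ≤ 0 := by
      intro k _
      have := hub (z + Pi.single k 1)
      have := hub (z - Pi.single k 1)
      rw [hz]
      linarith
    have hsum0 : ∑ k : Fin d, ((h (z + Pi.single k 1) - h z) + (h (z - Pi.single k 1) - h z)) = 0 :=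
      le_antisymm (Finset.sum_nonpos hterm) hsum
    have hall := (Finset.sum_eq_zero_iff_of_nonpos hterm).mp hsum0 i0 (Finset.mem_univ i0)
    have ha := hub (z + Pi.single i0 1)
    have hb := hub (z - Pi.single i0 1)
    rw [hz] at hall
    linarith
  have iter : ∀ k : ℕ, h (z0 + Pi.single i0 (k : ℤ)) = m := by
    intro k
    induction k with
    | zero => simpa using hz0.symm
    | succ k ih =>
      have hstep := key _ ih
      have : z0 + Pi.single i0 ((k+1 : ℕ) : ℤ) = (z0 + Pi.single i0 (k:ℤ)) + Pi.single i0 1 := by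
        rw [add_assoc, ← Pi.single_add]
        norm_num
      rw [this]
      exact hstep
  have hinj : Function.Injective (fun k : ℕ => z0 + Pi.single i0 (k:ℤ)) := by
    intro a b hab
    have := congrFun hab i0
    simp only [Pi.add_apply, Pi.single_eq_same, add_right_inj] at this
    exact_mod_cast this
  have hrange : Set.range (fun k : ℕ => z0 + Pi.single i0 (k:ℤ)) ⊆ Function.support h := by
    rintro _ ⟨k, rfl⟩
    simp only [Function.mem_support]
    rw [iter k]
    exact ne_of_gt hmpos
  exact (Set.infinite_range_of_injective hinj) (hfin.subset hrange)

lemma minPrinciple (hd : 0 < d) {S : Set (Site d)} {h : Site d → ℝ}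
    (hfin : (Function.support h).Finite)
    (hlap : ∀ x ∈ S, lap h x ≤ 0) (hout : ∀ x ∉ S, 0 ≤ h x) : ∀ x, 0 ≤ h x := by
  have hfin' : (Function.support (fun y => -(h y))).Finite := by
    apply hfin.subset
    intro y hy
    simp only [Function.mem_support] at *
    simpa using hy
  have := maxPrinciple hd (S := S) hfin'
    (fun x hx => by rw [lap_neg]; linarith [hlap x hx])
    (fun x hx => by simpa using hout x hx)
  intro x
  have := this x
  linarith

lemma dirichlet (hd : 0 < d) (D : Set (Site d)) (hD : D.Finite) (g : Site d → ℝ) :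
    ∃ w : Site d → ℝ, (∀ x ∉ D, w x = 0) ∧ (∀ x ∈ D, lap w x = g x) := by
  classical
  haveI : Fintype D := hD.fintype
  let ext : (D → ℝ) → (Site d → ℝ) := fun f x => if hx : x ∈ D then f ⟨x, hx⟩ else 0
  have hextsupp : ∀ f, Function.support (ext f) ⊆ D := by
    intro f y hy
    simp only [Function.mem_support, ext] at hy
    by_contra hyD
    rw [dif_neg hyD] at hy
    exact hy rfl
  let T : (D → ℝ) → (D → ℝ) := fun f z => lap (ext f) z
  have hTlin : IsLinearMap ℝ T := by
    constructor
    · intro f g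
      funext z
      have he : ext (f + g) = fun x => ext f x + ext g x := by
        funext x
        by_cases hx : x ∈ D <;> simp [ext, hx]
      show lap (ext (f+g)) z = lap (ext f) z + lap (ext g) z
      rw [he, lap_add]
    · intro c f
      funext z
      have he : ext (c • f) = fun x => c * ext f x := by
        funext x
        by_cases hx : x ∈ D <;> simp [ext, hx]
      show lap (ext (c • f)) z = c * lap (ext f) z
      rw [he, lap_smul]
  let TL : (D → ℝ) →ₗ[ℝ] (D → ℝ) := hTlin.mk' T
  have hinj : Function.Injective TL := by
    rw [injective_iff_map_eq_zero]
    intro f hf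
    have hlap0 : ∀ x ∈ D, lap (ext f) x = 0 := by
      intro x hx
      have := congrFun hf ⟨x, hx⟩
      exact this
    have hfin' : (Function.support (ext f)).Finite := hD.subset (hextsupp f)
    have hle := maxPrinciple hd (S := D) hfin'
      (fun x hx => le_of_eq (hlap0 x hx).symm)
      (fun x hx => le_of_eq (by simp [ext, hx]))
    have hge := minPrinciple hd (S := D) hfin'
      (fun x hx => le_of_eq (hlap0 x hx))
      (fun x hx => ge_of_eq (by simp [ext, hx]))
    funext z
    have h0 : ext f z = 0 := le_antisymm (hle z) (hge z)
    simpa [ext, z.2] using h0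
  have hsurj : Function.Surjective TL := LinearMap.injective_iff_surjective.mp hinj
  obtain ⟨f, hf⟩ := hsurj (fun z => g z)
  refine ⟨ext f, fun x hx => by simp [ext, hx], fun x hx => ?_⟩
  have := congrFun hf ⟨x, hx⟩
  exact this

end MaxPrinciple
section Refl

/-- Data of a lattice reflection adapted to a direction in `𝒩`. -/
structure ReflData (d : ℕ) where
  ρ : Site d → Site d
  L : Site d → ℤ
  M : ℤ
  π : Equiv.Perm (Fin d)
  ε : Fin d → ℤ
  b : Site d
  hε : ∀ k, ε k = 1 ∨ ε k = -1
  hρ : ∀ x k, ρ x (π k) = ε k * x k + b (π k)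
  invol : ∀ x, ρ (ρ x) = x
  plane_fix : ∀ x, 2 * L x = M → ρ x = x
  A5 : ∀ {x y}, nbr x y → 2 * L x ≤ M → M < 2 * L y → (ρ y = x ∨ nbr x (ρ y))
  A5' : ∀ {x y}, nbr x y → M < 2 * L x → 2 * L y < M → ρ y = x
  hM : 0 ≤ M
  hL0 : L 0 = 0

namespace ReflData

variable {d : ℕ} (R : ReflData d)

lemma image_single (x : Site d) (k : Fin d) (s : ℤ) :
    R.ρ (x + Pi.single k s) = R.ρ x + Pi.single (R.π k) (R.ε k * s) := by
  funext m
  obtain ⟨m0, rfl⟩ : ∃ m0, m = R.π m0 := ⟨R.π.symm m, (Equiv.apply_symm_apply R.π m).symm⟩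
  simp only [R.hρ, Pi.add_apply]
  by_cases hm : m0 = k
  · subst hm
    simp only [Pi.single_eq_same]
    ring
  · rw [Pi.single_eq_of_ne hm, Pi.single_eq_of_ne (fun hc => hm (R.π.injective hc))]
    ring

lemma nbr_ρ {x y : Site d} (h : nbr x y) : nbr (R.ρ x) (R.ρ y) := by
  unfold nbr at *
  have hre : ∑ m : Fin d, |R.ρ x m - R.ρ y m| = ∑ m : Fin d, |R.ρ x (R.π m) - R.ρ y (R.π m)| :=
    (Equiv.sum_comp R.π (fun m => |R.ρ x m - R.ρ y m|)).symm
  rw [hre, ← h]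
  apply Finset.sum_congr rfl
  intro k _
  rw [R.hρ x k, R.hρ y k]
  have : R.ε k * x k + R.b (R.π k) - (R.ε k * y k + R.b (R.π k)) = R.ε k * (x k - y k) := by ring
  rw [this, abs_mul]
  rcases R.hε k with h1 | h1 <;> rw [h1] <;> simp

lemma lap_ρ (f : Site d → ℝ) (x : Site d) :
    lap (fun z => f (R.ρ z)) x = lap f (R.ρ x) := by
  unfold lap
  congr 1
  have himg : ∀ (k : Fin d) (s : ℤ), R.ρ (x + Pi.single k s) = R.ρ x + Pi.single (R.π k) (R.ε k * s) :=
    R.image_single x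
  have hsub : ∀ (k : Fin d), x - Pi.single k 1 = x + Pi.single k (-1) := by
    intro k
    rw [sub_eq_add_neg, ← Pi.single_neg]
  have key : ∀ k : Fin d,
      ((fun z => f (R.ρ z)) (x + Pi.single k 1) - (fun z => f (R.ρ z)) x
        + ((fun z => f (R.ρ z)) (x - Pi.single k 1) - (fun z => f (R.ρ z)) x))
      = ((f (R.ρ x + Pi.single (R.π k) 1) - f (R.ρ x))
        + (f (R.ρ x - Pi.single (R.π k) 1) - f (R.ρ x))) := by
    intro k
    simp only
    rw [hsub k, himg k 1, himg k (-1)]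
    have h2 : R.ρ x - Pi.single (R.π k) 1 = R.ρ x + Pi.single (R.π k) (-1) := by
      rw [sub_eq_add_neg, ← Pi.single_neg]
    rcases R.hε k with h1 | h1 <;> rw [h1] <;> norm_num <;> rw [h2] <;> ring
  rw [Finset.sum_congr rfl (fun k _ => key k)]
  exact Equiv.sum_comp R.π (fun m => (f (R.ρ x + Pi.single m 1) - f (R.ρ x))
    + (f (R.ρ x - Pi.single m 1) - f (R.ρ x)))

end ReflData

end Refl
section Core

variable {d : ℕ}

lemma reflect_mono (hd : 2 ≤ d) {n κ : ℝ} (hn : 0 < n)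
    {V : Set (Site d)} {u : Site d → ℝ}
    (hpair : IsMinStabilizingPair (pointMass d n) κ V u) (R : ReflData d)
    {x : Site d} (hx : R.M < 2 * R.L x) : u x ≤ u (R.ρ x) := by
  classical
  obtain ⟨⟨hVfin, hsupp, hupos, huout, hulap, hubdry, huflux⟩, hmin⟩ := hpair
  set μ : Site d → ℝ := pointMass d n with hμdef
  have hd0 : 0 < d := by omega
  have hμ0 : ∀ y, 0 ≤ μ y := by
    intro y
    simp only [hμdef, pointMass]
    split <;> [exact le_of_lt hn; exact le_refl 0]
  have hμne : ∀ y : Site d, y ≠ 0 → μ y = 0 := by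
    intro y hy
    simp [hμdef, pointMass, hy]
  have h0V : (0 : Site d) ∈ V := by
    apply hsupp
    simp [Function.mem_support, hμdef, pointMass]
    exact ne_of_gt hn
  have hu_pos_intr : ∀ y, 0 < u y → y ∈ intr V := by
    intro y hy
    by_contra h
    rw [huout y h] at hy
    exact lt_irrefl 0 hy
  have hfar_ne : ∀ y : Site d, R.M < 2 * R.L y → y ≠ 0 := by
    intro y hy hc
    subst hc
    rw [R.hL0] at hy
    have := R.hM
    omega
  -- the folded set and function
  set S : Set (Site d) := {y | y ∈ V ∧ (2 * R.L y ≤ R.M ∨ R.ρ y ∈ V)} with hSdef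
  have hSV : S ⊆ V := fun y hy => hy.1
  have hSfin : S.Finite := hVfin.subset hSV
  set v : Site d → ℝ := fun y => if 2 * R.L y ≤ R.M then u y else min (u y) (u (R.ρ y)) with hvdef
  have hvle : ∀ y, v y ≤ u y := by
    intro y
    simp only [hvdef]
    split
    · exact le_refl _
    · exact min_le_left _ _
  have hvpos : ∀ y, 0 ≤ v y := by
    intro y
    simp only [hvdef]
    split
    · exact hupos y
    · exact le_min (hupos y) (hupos _)
  have hv_refl : ∀ y, 2 * R.L y = R.M ∨ R.M < 2 * R.L y → v y ≤ u (R.ρ y) := by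
    intro y hy
    rcases hy with hy | hy
    · rw [R.plane_fix y hy]
      simp only [hvdef]
      rw [if_pos (le_of_eq hy)]
    · simp only [hvdef]
      rw [if_neg (by omega)]
      exact min_le_right _ _
  -- c1 : positivity set of v is in the interior of S
  have hc1 : ∀ y, v y ≠ 0 → y ∈ intr S := by
    intro y hyv
    have hy0 : 0 < v y := lt_of_le_of_ne (hvpos y) (Ne.symm hyv)
    rw [mem_intr]
    by_cases hny : 2 * R.L y ≤ R.M
    · have hyu : 0 < u y := by
        have : v y = u y := by simp only [hvdef]; rw [if_pos hny]
        linarith [this ▸ hy0]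
      have hyintr := hu_pos_intr y hyu
      obtain ⟨hyV, hynb⟩ := mem_intr.mp hyintr
      refine ⟨⟨hyV, Or.inl hny⟩, ?_⟩
      intro z hz
      have hzV : z ∈ V := hynb z hz
      by_cases hnz : 2 * R.L z ≤ R.M
      · exact ⟨hzV, Or.inl hnz⟩
      · push_neg at hnz
        rcases R.A5 hz hny hnz with h | h
        · exact ⟨hzV, Or.inr (h ▸ hyV)⟩
        · exact ⟨hzV, Or.inr (hynb _ h)⟩
    · push_neg at hny
      have hvy : v y = min (u y) (u (R.ρ y)) := by
        simp only [hvdef]; rw [if_neg (by omega)]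
      rw [hvy] at hy0
      have hyu : 0 < u y := lt_of_lt_of_le hy0 (min_le_left _ _)
      have hyρ : 0 < u (R.ρ y) := lt_of_lt_of_le hy0 (min_le_right _ _)
      have hyintr := hu_pos_intr y hyu
      have hρintr := hu_pos_intr _ hyρ
      refine ⟨⟨(mem_intr.mp hyintr).1, Or.inr (mem_intr.mp hρintr).1⟩, ?_⟩
      intro z hz
      have hzV : z ∈ V := (mem_intr.mp hyintr).2 z hz
      by_cases hnz : 2 * R.L z ≤ R.M
      · exact ⟨hzV, Or.inl hnz⟩
      · have : nbr (R.ρ y) (R.ρ z) := R.nbr_ρ hz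
        exact ⟨hzV, Or.inr ((mem_intr.mp hρintr).2 _ this)⟩
  have hvS : ∀ y, y ∉ intr S → v y = 0 := by
    intro y hy
    by_contra h
    exact hy (hc1 y h)
  have hintrSV : intr S ⊆ intr V := by
    intro y hy
    rw [mem_intr] at *
    exact ⟨hSV hy.1, fun z hz => hSV (hy.2 z hz)⟩
  -- c2 : v is a supersolution on intr S
  have hc2 : ∀ y ∈ intr S, lap v y ≤ -(μ y) := by
    intro y hyS
    have hyV : y ∈ intr V := hintrSV hyS
    by_cases hny : 2 * R.L y ≤ R.M
    · have h1 : lap v y ≤ lap u y :=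
        lap_mono_at (fun z _ => hvle z) (by simp only [hvdef]; rw [if_pos hny])
      rw [hulap y hyV] at h1
      exact h1
    · push_neg at hny
      have hμy : μ y = 0 := hμne y (hfar_ne y hny)
      by_cases hcmp : u y ≤ u (R.ρ y)
      · have h1 : lap v y ≤ lap u y :=
          lap_mono_at (fun z _ => hvle z)
            (by simp only [hvdef]; rw [if_neg (by omega), min_eq_left hcmp])
        rw [hulap y hyV] at h1
        exact h1
      · push_neg at hcmp
        have hvy : v y = u (R.ρ y) := by
          simp only [hvdef]; rw [if_neg (by omega), min_eq_right (le_of_lt hcmp)]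
        have hρyV : R.ρ y ∈ V := by
          rcases (mem_intr.mp hyS).1.2 with h | h
          · omega
          · exact h
        have hρintr : R.ρ y ∈ intr V := by
          rw [mem_intr]
          refine ⟨hρyV, ?_⟩
          intro z hz
          have hz' : nbr y (R.ρ z) := by
            have := R.nbr_ρ hz
            rwa [R.invol] at this
          have hzS : R.ρ z ∈ S := (mem_intr.mp hyS).2 _ hz'
          obtain ⟨hzV, hor⟩ := hzS
          rcases hor with hnear | hfarr
          · rcases eq_or_lt_of_le hnear with heq | hlt
            · have hfix := R.plane_fix _ heq
              rw [R.invol] at hfix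
              rw [hfix]
              exact hzV
            · have h5 := R.A5' hz' hny hlt
              rw [R.invol] at h5
              rw [h5]
              exact (mem_intr.mp hyV).1
          · rwa [R.invol] at hfarr
        have hstep : lap v y ≤ lap (fun z => u (R.ρ z)) y := by
          apply lap_mono_at _ (by rw [hvy])
          intro z hz
          by_cases hnz : 2 * R.L z ≤ R.M
          · rcases eq_or_lt_of_le hnz with heq | hlt
            · exact hv_refl z (Or.inl heq)
            · have hzy := R.A5' hz hny hlt
              have hzρy : z = R.ρ y := by rw [← hzy, R.invol]
              calc v z ≤ u z := hvle z
                _ = u (R.ρ y) := by rw [hzρy]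
                _ ≤ u y := le_of_lt hcmp
                _ = u (R.ρ z) := by rw [hzy]
          · exact hv_refl z (Or.inr (by omega))
        rw [R.lap_ρ u y, hulap _ hρintr] at hstep
        have := hμ0 (R.ρ y)
        rw [hμy]
        linarith
  -- Dirichlet solution on intr S
  have hDfin : (intr S).Finite := hSfin.subset (fun y hy => hy.1)
  obtain ⟨w, hwout, hwlap⟩ := dirichlet hd0 (intr S) hDfin (fun y => -(μ y))
  have hwsupp : (Function.support w).Finite := by
    apply hDfin.subset
    intro y hy
    simp only [Function.mem_support] at hy
    by_contra h
    exact hy (hwout y h)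
  have hwpos : ∀ y, 0 ≤ w y :=
    minPrinciple hd0 (S := intr S) hwsupp
      (fun y hy => by rw [hwlap y hy]; linarith [hμ0 y])
      (fun y hy => ge_of_eq (hwout y hy))
  have hvsupp : (Function.support v).Finite := by
    apply hDfin.subset
    intro y hy
    simp only [Function.mem_support] at hy
    exact hc1 y hy
  have hwv : ∀ y, w y ≤ v y := by
    have := maxPrinciple hd0 (S := intr S) (h := fun y => w y - v y)
      (by
        apply (hwsupp.union hvsupp).subset
        intro y hy
        simp only [Function.mem_support] at hy ⊢
        by_contra hc
        simp only [Set.mem_union, Function.mem_support, not_or, not_not] at hc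
        rw [hc.1, hc.2] at hy
        simp at hy)
      (fun y hy => by rw [lap_sub, hwlap y hy]; linarith [hc2 y hy])
      (fun y hy => by simp only [hwout y hy]; simp; exact hvpos y)
    intro y
    have h2 := this y
    linarith
  -- (S, w) is a stabilizing pair
  have hSpair : IsStabilizingPair μ κ S w := by
    refine ⟨hSfin, ?_, hwpos, hwout, hwlap, ?_, ?_⟩
    · intro y hy
      have hy0 : y = 0 := by
        by_contra h
        exact hy (hμne y h)
      subst hy0
      refine ⟨h0V, Or.inl ?_⟩
      rw [R.hL0]
      have := R.hM
      omega
    · intro y hy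
      exact hwout y (fun h => h.2 hy)
    · intro y hy
      have hyS : y ∈ S := hy.1
      have hynotintr : y ∉ intr S := fun h => h.2 hy
      have hv0 : v y = 0 := hvS y hynotintr
      have hw0 : w y = 0 := hwout y hynotintr
      have hlapwv : lap w y ≤ lap v y := lap_mono_at (fun z _ => hwv z) (by rw [hv0, hw0])
      suffices hgoal : μ y + lap v y ≤ κ by linarith
      obtain ⟨hyV, hor⟩ := hyS
      by_cases hybV : y ∈ bdry V
      · have h1 : lap v y ≤ lap u y :=
          lap_mono_at (fun z _ => hvle z) (by rw [hv0, hubdry y hybV])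
        linarith [huflux y hybV]
      · have hyintrV : y ∈ intr V := ⟨hyV, hybV⟩
        obtain ⟨z0, hz0n, hz0S⟩ := hy.2
        have hz0V : z0 ∈ V := (mem_intr.mp hyintrV).2 _ hz0n
        have hyfar : R.M < 2 * R.L y := by
          by_contra hnear
          push_neg at hnear
          by_cases hz0near : 2 * R.L z0 ≤ R.M
          · exact hz0S ⟨hz0V, Or.inl hz0near⟩
          · push_neg at hz0near
            rcases R.A5 hz0n hnear hz0near with he | hn
            · exact hz0S ⟨hz0V, Or.inr (he ▸ hyV)⟩
            · exact hz0S ⟨hz0V, Or.inr ((mem_intr.mp hyintrV).2 _ hn)⟩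
        have hρyV : R.ρ y ∈ V := by
          rcases hor with h | h
          · omega
          · exact h
        have hz0far : R.M < 2 * R.L z0 := by
          by_contra hz0near
          push_neg at hz0near
          exact hz0S ⟨hz0V, Or.inl hz0near⟩
        have hρz0 : R.ρ z0 ∉ V := fun h => hz0S ⟨hz0V, Or.inr h⟩
        have hρybdry : R.ρ y ∈ bdry V := ⟨hρyV, R.ρ z0, R.nbr_ρ hz0n, hρz0⟩
        have huρy : u (R.ρ y) = 0 := hubdry _ hρybdry
        have hμy : μ y = 0 := hμne y (hfar_ne y hyfar)
        have hlapv : lap v y ≤ lap (fun z => u (R.ρ z)) y := by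
          apply lap_mono_at _ (by rw [hv0, huρy])
          intro z hz
          by_cases hnz : 2 * R.L z ≤ R.M
          · rcases eq_or_lt_of_le hnz with heq | hlt
            · exact hv_refl z (Or.inl heq)
            · have hzy := R.A5' hz hyfar hlt
              have hzρy : z = R.ρ y := by rw [← hzy, R.invol]
              calc v z ≤ u z := hvle z
                _ = 0 := by rw [hzρy, huρy]
                _ ≤ u (R.ρ z) := hupos _
          · exact hv_refl z (Or.inr (by omega))
        rw [R.lap_ρ u y] at hlapv
        have hfl := huflux _ hρybdry
        have hμρ := hμ0 (R.ρ y)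
        rw [hμy]
        linarith
  -- minimality and conclusion
  have hVS : V ⊆ S := hmin S w hSpair
  have hSeq : S = V := Set.Subset.antisymm hSV hVS
  have huv : ∀ y, u y ≤ v y := by
    have := maxPrinciple hd0 (S := intr V) (h := fun y => u y - v y)
      (by
        have husupp : (Function.support u).Finite := by
          apply hVfin.subset
          intro y hy
          simp only [Function.mem_support] at hy
          exact (hu_pos_intr y (lt_of_le_of_ne (hupos y) (Ne.symm hy))).1
        apply (husupp.union hvsupp).subset
        intro y hy
        simp only [Function.mem_support] at hy ⊢
        by_contra hc
        simp only [Set.mem_union, Function.mem_support, not_or, not_not] at hc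
        rw [hc.1, hc.2] at hy
        simp at hy)
      (fun y hy => by
        rw [lap_sub, hulap y hy]
        have := hc2 y (by rw [hSeq]; exact hy)
        linarith)
      (fun y hy => by simp only [huout y hy]; simp; exact hvpos y)
    intro y
    have h2 := this y
    linarith
  have := huv x
  have hvx : v x = min (u x) (u (R.ρ x)) := by
    simp only [hvdef]; rw [if_neg (by omega)]
  rw [hvx] at this
  exact le_trans this (min_le_right _ _)

end Core
section Shapes

variable {d : ℕ}

/-- Reflection across the hyperplane `σ·xᵢ = M/2`. -/
def shape1 (i : Fin d) (σ : ℤ) (hσ : σ = 1 ∨ σ = -1) (M : ℤ) (hM : 0 ≤ M) : ReflData d where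
  ρ := fun x => Function.update x i (σ * M - x i)
  L := fun x => σ * x i
  M := M
  π := Equiv.refl _
  ε := fun k => if k = i then -1 else 1
  b := Pi.single i (σ * M)
  hε := fun k => by by_cases h : k = i <;> simp [h]
  hρ := by
    intro x k
    simp only [Equiv.refl_apply]
    rcases eq_or_ne k i with h | h
    · rw [h, Function.update_self, Pi.single_eq_same, if_pos rfl]
      ring
    · rw [Function.update_of_ne h, Pi.single_eq_of_ne h, if_neg h]
      ring
  invol := by
    intro x
    funext m
    rcases eq_or_ne m i with h | h
    · rw [h, Function.update_self, Function.update_self]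
      ring
    · rw [Function.update_of_ne h, Function.update_of_ne h]
  plane_fix := by
    intro x h
    have hx : σ * M - x i = x i := by rcases hσ with rfl | rfl <;> omega
    rw [hx, Function.update_eq_self]
  A5 := by
    intro x y hnbr hxn hyf
    obtain ⟨k, s, hs, rfl⟩ := nbr_char hnbr
    rcases eq_or_ne k i with hk | hk
    · rw [hk] at hyf ⊢
      rw [Function.update_self] at hyf
      rw [Function.update_self, Function.update_idem]
      rcases hσ with rfl | rfl <;> rcases hs with rfl | rfl
      · have hM2 : M = 2 * x i ∨ M = 2 * x i + 1 := by omega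
        rcases hM2 with h | h
        · right
          have hv : 1 * M - (x i + 1) = x i + (-1) := by omega
          rw [hv]
          exact nbr_update x i (Or.inr rfl)
        · left
          have hv : 1 * M - (x i + 1) = x i := by omega
          rw [hv, Function.update_eq_self]
      · exfalso; omega
      · exfalso; omega
      · have hM2 : M = 2 * (-1 * x i) ∨ M = 2 * (-1 * x i) + 1 := by omega
        rcases hM2 with h | h
        · right
          have hv : -1 * M - (x i + -1) = x i + 1 := by omega
          rw [hv]
          exact nbr_update x i (Or.inl rfl)
        · left
          have hv : -1 * M - (x i + -1) = x i := by omega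
          rw [hv, Function.update_eq_self]
    · exfalso
      rw [Function.update_of_ne (fun hc => hk hc.symm)] at hyf
      omega
  A5' := by
    intro x y hnbr hxf hyn
    obtain ⟨k, s, hs, rfl⟩ := nbr_char hnbr
    rcases eq_or_ne k i with hk | hk
    · rw [hk] at hyn ⊢
      rw [Function.update_self] at hyn
      rw [Function.update_self, Function.update_idem]
      rcases hσ with rfl | rfl <;> rcases hs with rfl | rfl
      · exfalso; omega
      · have hv : 1 * M - (x i + -1) = x i := by omega
        rw [hv, Function.update_eq_self]
      · have hv : -1 * M - (x i + 1) = x i := by omega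
        rw [hv, Function.update_eq_self]
      · exfalso; omega
    · exfalso
      rw [Function.update_of_ne (fun hc => hk hc.symm)] at hyn
      omega
  hM := hM
  hL0 := by simp

/-- Reflection across the hyperplane `σ·(xᵢ+xⱼ) = c`. -/
def shape2 (i j : Fin d) (hij : i ≠ j) (σ : ℤ) (hσ : σ = 1 ∨ σ = -1) (c : ℤ) (hc : 0 ≤ c) :
    ReflData d where
  ρ := fun x m => if m = i then σ * c - x j else if m = j then σ * c - x i else x m
  L := fun x => σ * (x i + x j)
  M := 2 * c
  π := Equiv.swap i j
  ε := fun k => if k = i ∨ k = j then -1 else 1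
  b := fun m => if m = i ∨ m = j then σ * c else 0
  hε := fun k => by by_cases h : k = i ∨ k = j <;> simp [h]
  hρ := by
    intro x k
    simp only [Equiv.swap_apply_def]
    rcases hσ with rfl | rfl <;> split_ifs <;>
      first | omega | (simp_all; omega) | simp_all
  invol := by
    intro x
    funext m
    simp only
    rcases hσ with rfl | rfl <;> split_ifs <;>
      first | omega | (simp_all; omega) | simp_all
  plane_fix := by
    intro x h
    funext m
    rcases hσ with rfl | rfl <;> split_ifs <;>
      first | omega | (simp_all; omega) | simp_all
  A5 := by
    intro x y hnbr hxn hyf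
    obtain ⟨k, s, hs, rfl⟩ := nbr_char hnbr
    right
    rcases eq_or_ne i k with rfl | hki
    · have hρy : (fun m => if m = i then σ * c - Function.update x i (x i + s) j
          else if m = j then σ * c - Function.update x i (x i + s) i
          else Function.update x i (x i + s) m)
          = Function.update x j (x j + (-s)) := by
        funext m
        simp only [Function.update_apply]
        rcases hσ with rfl | rfl <;> rcases hs with rfl | rfl <;> split_ifs <;>
          first | omega | (simp_all; omega) | simp_all
      rw [hρy]
      apply nbr_update
      rcases hσ with rfl | rfl <;> rcases hs with rfl | rfl <;> omega
    · rcases eq_or_ne j k with rfl | hkj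
      · have hρy : (fun m => if m = i then σ * c - Function.update x j (x j + s) j
            else if m = j then σ * c - Function.update x j (x j + s) i
            else Function.update x j (x j + s) m)
            = Function.update x i (x i + (-s)) := by
          funext m
          simp only [Function.update_apply]
          rcases hσ with rfl | rfl <;> rcases hs with rfl | rfl <;> split_ifs <;>
            first | omega | (simp_all; omega) | simp_all
        rw [hρy]
        apply nbr_update
        rcases hσ with rfl | rfl <;> rcases hs with rfl | rfl <;> omega
      · exfalso
        simp only [Function.update_apply] at hyf
        rcases hσ with rfl | rfl <;> split_ifs at hyf <;>
          first | omega | (simp_all; omega) | simp_all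
  A5' := by
    intro x y hnbr hxf hyn
    obtain ⟨k, s, hs, rfl⟩ := nbr_char hnbr
    exfalso
    simp only [Function.update_apply] at hyn
    rcases hσ with rfl | rfl <;> rcases hs with rfl | rfl <;> split_ifs at hyn <;>
      first | omega | (simp_all; omega) | simp_all
  hM := by omega
  hL0 := by simp

/-- Reflection across the hyperplane `σ·(xᵢ-xⱼ) = c`. -/
def shape3 (i j : Fin d) (hij : i ≠ j) (σ : ℤ) (hσ : σ = 1 ∨ σ = -1) (c : ℤ) (hc : 0 ≤ c) :
    ReflData d where
  ρ := fun x m => if m = i then x j + σ * c else if m = j then x i - σ * c else x m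
  L := fun x => σ * (x i - x j)
  M := 2 * c
  π := Equiv.swap i j
  ε := fun _ => 1
  b := fun m => if m = i then σ * c else if m = j then -(σ * c) else 0
  hε := fun _ => Or.inl rfl
  hρ := by
    intro x k
    simp only [Equiv.swap_apply_def]
    rcases hσ with rfl | rfl <;> split_ifs <;>
      first | omega | (simp_all; omega) | simp_all
  invol := by
    intro x
    funext m
    simp only
    rcases hσ with rfl | rfl <;> split_ifs <;>
      first | omega | (simp_all; omega) | simp_all
  plane_fix := by
    intro x h
    funext m
    rcases hσ with rfl | rfl <;> split_ifs <;>
      first | omega | (simp_all; omega) | simp_all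
  A5 := by
    intro x y hnbr hxn hyf
    obtain ⟨k, s, hs, rfl⟩ := nbr_char hnbr
    right
    rcases eq_or_ne i k with rfl | hki
    · have hρy : (fun m => if m = i then Function.update x i (x i + s) j + σ * c
          else if m = j then Function.update x i (x i + s) i - σ * c
          else Function.update x i (x i + s) m)
          = Function.update x j (x j + s) := by
        funext m
        simp only [Function.update_apply]
        rcases hσ with rfl | rfl <;> rcases hs with rfl | rfl <;> split_ifs <;>
          first | omega | (simp_all; omega) | simp_all
      rw [hρy]
      exact nbr_update x j hs
    · rcases eq_or_ne j k with rfl | hkj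
      · have hρy : (fun m => if m = i then Function.update x j (x j + s) j + σ * c
            else if m = j then Function.update x j (x j + s) i - σ * c
            else Function.update x j (x j + s) m)
            = Function.update x i (x i + s) := by
          funext m
          simp only [Function.update_apply]
          rcases hσ with rfl | rfl <;> rcases hs with rfl | rfl <;> split_ifs <;>
            first | omega | (simp_all; omega) | simp_all
        rw [hρy]
        exact nbr_update x i hs
      · exfalso
        simp only [Function.update_apply] at hyf
        rcases hσ with rfl | rfl <;> split_ifs at hyf <;>
          first | omega | (simp_all; omega) | simp_all
  A5' := by
    intro x y hnbr hxf hyn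
    obtain ⟨k, s, hs, rfl⟩ := nbr_char hnbr
    exfalso
    simp only [Function.update_apply] at hyn
    rcases hσ with rfl | rfl <;> rcases hs with rfl | rfl <;> split_ifs at hyn <;>
      first | omega | (simp_all; omega) | simp_all
  hM := by omega
  hL0 := by simp

end Shapes
section Glue

lemma sign_aux_neg {a b : ℤ} (h : a * b ≤ 0) (ha : a < 0) : 0 ≤ b := by nlinarith
lemma sign_aux_pos {a b : ℤ} (h : a * b ≤ 0) (ha : 0 < a) : b ≤ 0 := by nlinarith

theorem stmt8' {d : ℕ} (hd : 2 ≤ d) (n κ : ℝ) (hn : 0 < n) (hκ : 0 < κ)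
    (V : Set (Site d)) (u : Site d → ℝ)
    (hpair : IsMinStabilizingPair (pointMass d n) κ V u) :
    ∀ e ∈ dirN d, ∀ X1 X2 : Site d,
      (∃ t : ℝ, t ≠ 0 ∧ ∀ i, ((X1 i - X2 i : ℤ) : ℝ) = t * ((e i : ℤ) : ℝ)) →
      enorm X1 ≤ enorm X2 → u X2 ≤ u X1 := by
  intro e he X1 X2 hex henorm
  obtain ⟨t, ht0, ht⟩ := hex
  -- squares inequality over ℤ
  have hsq : (∑ k, (X1 k)^2 : ℤ) ≤ ∑ k, (X2 k)^2 := by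
    have h1 : (0:ℝ) ≤ ∑ k, ((X1 k : ℝ))^2 := by positivity
    have h2 : (0:ℝ) ≤ ∑ k, ((X2 k : ℝ))^2 := by positivity
    unfold enorm at henorm
    have h3 := pow_le_pow_left₀ (Real.sqrt_nonneg _) henorm 2
    rw [Real.sq_sqrt h1, Real.sq_sqrt h2] at h3
    exact_mod_cast h3
  obtain ⟨i, j, hij, hshape⟩ := he
  rcases hshape with rfl | rfl | rfl
  · -- e = eᵢ
    set tz : ℤ := X1 i - X2 i with htzdef
    have hti : ((X1 i - X2 i : ℤ) : ℝ) = t := by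
      have h := ht i
      rw [Pi.single_eq_same] at h
      simpa using h
    have htz0 : tz ≠ 0 := by
      intro h
      apply ht0
      rw [← hti, ← htzdef, h]
      simp
    have hk : ∀ k, k ≠ i → X1 k = X2 k := by
      intro k hkne
      have h := ht k
      rw [Pi.single_eq_of_ne hkne] at h
      have h' : ((X1 k - X2 k : ℤ) : ℝ) = 0 := by simpa using h
      have : X1 k - X2 k = 0 := by exact_mod_cast h'
      omega
    have hdiff : (∑ k, (X1 k)^2 : ℤ) - ∑ k, (X2 k)^2 = tz * (X1 i + X2 i) := by
      rw [← Finset.sum_sub_distrib]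
      have hterm : ∀ k : Fin d, (X1 k)^2 - (X2 k)^2
          = if k = i then tz * (X1 i + X2 i) else 0 := by
        intro k
        by_cases hki : k = i
        · rw [if_pos hki, hki]
          have hX : X1 i = X2 i + tz := by omega
          rw [hX]; ring
        · rw [if_neg hki, hk k hki]; ring
      rw [Finset.sum_congr rfl (fun k _ => hterm k)]
      simp
    have hprod : tz * (X1 i + X2 i) ≤ 0 := by linarith
    rcases lt_or_gt_of_ne htz0 with htneg | htpos
    · have hM : (0:ℤ) ≤ X1 i + X2 i := sign_aux_neg hprod htneg
      have hfar : (shape1 i 1 (Or.inl rfl) (X1 i + X2 i) hM).M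
          < 2 * (shape1 i 1 (Or.inl rfl) (X1 i + X2 i) hM).L X2 := by
        show X1 i + X2 i < 2 * (1 * X2 i)
        omega
      have hmain := reflect_mono hd hn hpair (shape1 i 1 (Or.inl rfl) (X1 i + X2 i) hM) hfar
      have hρ : (shape1 i 1 (Or.inl rfl) (X1 i + X2 i) hM).ρ X2 = X1 := by
        show Function.update X2 i (1 * (X1 i + X2 i) - X2 i) = X1
        funext m
        by_cases hm : m = i
        · rw [hm, Function.update_self]; omega
        · rw [Function.update_of_ne hm]; exact (hk m hm).symm
      rwa [hρ] at hmain
    · have hM : (0:ℤ) ≤ -(X1 i + X2 i) := by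
        have := sign_aux_pos hprod htpos
        omega
      have hfar : (shape1 i (-1) (Or.inr rfl) (-(X1 i + X2 i)) hM).M
          < 2 * (shape1 i (-1) (Or.inr rfl) (-(X1 i + X2 i)) hM).L X2 := by
        show -(X1 i + X2 i) < 2 * (-1 * X2 i)
        omega
      have hmain := reflect_mono hd hn hpair (shape1 i (-1) (Or.inr rfl) (-(X1 i + X2 i)) hM) hfar
      have hρ : (shape1 i (-1) (Or.inr rfl) (-(X1 i + X2 i)) hM).ρ X2 = X1 := by
        show Function.update X2 i ((-1) * (-(X1 i + X2 i)) - X2 i) = X1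
        funext m
        by_cases hm : m = i
        · rw [hm, Function.update_self]; omega
        · rw [Function.update_of_ne hm]; exact (hk m hm).symm
      rwa [hρ] at hmain
  · -- e = eᵢ + eⱼ
    set tz : ℤ := X1 i - X2 i with htzdef
    have hei : ((Pi.single i 1 + Pi.single j 1 : Site d) i : ℤ) = 1 := by
      simp [Pi.single_eq_of_ne hij]
    have hej : ((Pi.single i 1 + Pi.single j 1 : Site d) j : ℤ) = 1 := by
      simp [Pi.single_eq_of_ne hij.symm]
    have hti : ((X1 i - X2 i : ℤ) : ℝ) = t := by
      have h := ht i
      rw [hei] at h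
      simpa using h
    have htj : ((X1 j - X2 j : ℤ) : ℝ) = t := by
      have h := ht j
      rw [hej] at h
      simpa using h
    have htz0 : tz ≠ 0 := by
      intro h
      apply ht0
      rw [← hti, ← htzdef, h]
      simp
    have htzj : X1 j - X2 j = tz := by
      have : ((X1 j - X2 j : ℤ) : ℝ) = ((X1 i - X2 i : ℤ) : ℝ) := by rw [hti, htj]
      exact_mod_cast this
    have hk : ∀ k, k ≠ i → k ≠ j → X1 k = X2 k := by
      intro k hki hkj
      have h := ht k
      have hek : ((Pi.single i 1 + Pi.single j 1 : Site d) k : ℤ) = 0 := by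
        simp [Pi.single_eq_of_ne hki, Pi.single_eq_of_ne hkj]
      rw [hek] at h
      have h' : ((X1 k - X2 k : ℤ) : ℝ) = 0 := by simpa using h
      have : X1 k - X2 k = 0 := by exact_mod_cast h'
      omega
    have hdiff : (∑ k, (X1 k)^2 : ℤ) - ∑ k, (X2 k)^2
        = tz * (2 * (X2 i + X2 j + tz)) := by
      rw [← Finset.sum_sub_distrib]
      have hterm : ∀ k : Fin d, (X1 k)^2 - (X2 k)^2
          = (if k = i then tz * (X1 i + X2 i) else 0)
            + (if k = j then tz * (X1 j + X2 j) else 0) := by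
        intro k
        by_cases hki : k = i
        · rw [if_pos hki, if_neg (hki ▸ hij), hki]
          have hX : X1 i = X2 i + tz := by omega
          rw [hX]; ring
        · by_cases hkj : k = j
          · rw [if_neg hki, if_pos hkj, hkj]
            have hX : X1 j = X2 j + tz := by omega
            rw [hX]; ring
          · rw [if_neg hki, if_neg hkj, hk k hki hkj]; ring
      rw [Finset.sum_congr rfl (fun k _ => hterm k), Finset.sum_add_distrib]
      simp
      have h1 : X1 i = X2 i + tz := by omega
      have h2 : X1 j = X2 j + tz := by omega
      rw [h1, h2]; ring
    have hprod : tz * (2 * (X2 i + X2 j + tz)) ≤ 0 := by linarith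
    rcases lt_or_gt_of_ne htz0 with htneg | htpos
    · have hM : (0:ℤ) ≤ X2 i + X2 j + tz := by
        have := sign_aux_neg hprod htneg
        omega
      have hfar : (shape2 i j hij 1 (Or.inl rfl) (X2 i + X2 j + tz) hM).M
          < 2 * (shape2 i j hij 1 (Or.inl rfl) (X2 i + X2 j + tz) hM).L X2 := by
        show 2 * (X2 i + X2 j + tz) < 2 * (1 * (X2 i + X2 j))
        omega
      have hmain := reflect_mono hd hn hpair
        (shape2 i j hij 1 (Or.inl rfl) (X2 i + X2 j + tz) hM) hfar
      have hρ : (shape2 i j hij 1 (Or.inl rfl) (X2 i + X2 j + tz) hM).ρ X2 = X1 := by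
        show (fun m => if m = i then 1 * (X2 i + X2 j + tz) - X2 j
          else if m = j then 1 * (X2 i + X2 j + tz) - X2 i else X2 m) = X1
        funext m
        by_cases hmi : m = i
        · rw [hmi]; rw [if_pos rfl]; omega
        · by_cases hmj : m = j
          · rw [hmj]; rw [if_neg hij.symm, if_pos rfl]
            omega
          · rw [if_neg hmi, if_neg hmj]; exact (hk m hmi hmj).symm
      rwa [hρ] at hmain
    · have hM : (0:ℤ) ≤ -(X2 i + X2 j + tz) := by
        have := sign_aux_pos hprod htpos
        omega
      have hfar : (shape2 i j hij (-1) (Or.inr rfl) (-(X2 i + X2 j + tz)) hM).M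
          < 2 * (shape2 i j hij (-1) (Or.inr rfl) (-(X2 i + X2 j + tz)) hM).L X2 := by
        show 2 * (-(X2 i + X2 j + tz)) < 2 * ((-1) * (X2 i + X2 j))
        omega
      have hmain := reflect_mono hd hn hpair
        (shape2 i j hij (-1) (Or.inr rfl) (-(X2 i + X2 j + tz)) hM) hfar
      have hρ : (shape2 i j hij (-1) (Or.inr rfl) (-(X2 i + X2 j + tz)) hM).ρ X2 = X1 := by
        show (fun m => if m = i then (-1) * (-(X2 i + X2 j + tz)) - X2 j
          else if m = j then (-1) * (-(X2 i + X2 j + tz)) - X2 i else X2 m) = X1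
        funext m
        by_cases hmi : m = i
        · rw [hmi]; rw [if_pos rfl]; omega
        · by_cases hmj : m = j
          · rw [hmj]; rw [if_neg hij.symm, if_pos rfl]
            omega
          · rw [if_neg hmi, if_neg hmj]; exact (hk m hmi hmj).symm
      rwa [hρ] at hmain
  · -- e = eᵢ - eⱼ
    set tz : ℤ := X1 i - X2 i with htzdef
    have hei : ((Pi.single i 1 - Pi.single j 1 : Site d) i : ℤ) = 1 := by
      simp [Pi.single_eq_of_ne hij]
    have hej : ((Pi.single i 1 - Pi.single j 1 : Site d) j : ℤ) = -1 := by
      simp [Pi.single_eq_of_ne hij.symm]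
    have hti : ((X1 i - X2 i : ℤ) : ℝ) = t := by
      have h := ht i
      rw [hei] at h
      simpa using h
    have htj : ((X1 j - X2 j : ℤ) : ℝ) = -t := by
      have h := ht j
      rw [hej] at h
      push_cast at h ⊢
      linarith
    have htz0 : tz ≠ 0 := by
      intro h
      apply ht0
      rw [← hti, ← htzdef, h]
      simp
    have htzj : X1 j - X2 j = -tz := by
      have : ((X1 j - X2 j : ℤ) : ℝ) = -((X1 i - X2 i : ℤ) : ℝ) := by rw [hti, htj]
      exact_mod_cast this
    have hk : ∀ k, k ≠ i → k ≠ j → X1 k = X2 k := by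
      intro k hki hkj
      have h := ht k
      have hek : ((Pi.single i 1 - Pi.single j 1 : Site d) k : ℤ) = 0 := by
        simp [Pi.single_eq_of_ne hki, Pi.single_eq_of_ne hkj]
      rw [hek] at h
      have h' : ((X1 k - X2 k : ℤ) : ℝ) = 0 := by simpa using h
      have : X1 k - X2 k = 0 := by exact_mod_cast h'
      omega
    have hdiff : (∑ k, (X1 k)^2 : ℤ) - ∑ k, (X2 k)^2
        = tz * (2 * (X2 i - X2 j + tz)) := by
      rw [← Finset.sum_sub_distrib]
      have hterm : ∀ k : Fin d, (X1 k)^2 - (X2 k)^2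
          = (if k = i then tz * (X1 i + X2 i) else 0)
            + (if k = j then -tz * (X1 j + X2 j) else 0) := by
        intro k
        by_cases hki : k = i
        · rw [if_pos hki, if_neg (hki ▸ hij), hki]
          have hX : X1 i = X2 i + tz := by omega
          rw [hX]; ring
        · by_cases hkj : k = j
          · rw [if_neg hki, if_pos hkj, hkj]
            have hX : X1 j = X2 j - tz := by omega
            rw [hX]; ring
          · rw [if_neg hki, if_neg hkj, hk k hki hkj]; ring
      rw [Finset.sum_congr rfl (fun k _ => hterm k), Finset.sum_add_distrib]
      simp
      have h1 : X1 i = X2 i + tz := by omega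
      have h2 : X1 j = X2 j - tz := by omega
      rw [h1, h2]; ring
    have hprod : tz * (2 * (X2 i - X2 j + tz)) ≤ 0 := by linarith
    rcases lt_or_gt_of_ne htz0 with htneg | htpos
    · have hM : (0:ℤ) ≤ X2 i - X2 j + tz := by
        have := sign_aux_neg hprod htneg
        omega
      have hfar : (shape3 i j hij 1 (Or.inl rfl) (X2 i - X2 j + tz) hM).M
          < 2 * (shape3 i j hij 1 (Or.inl rfl) (X2 i - X2 j + tz) hM).L X2 := by
        show 2 * (X2 i - X2 j + tz) < 2 * (1 * (X2 i - X2 j))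
        omega
      have hmain := reflect_mono hd hn hpair
        (shape3 i j hij 1 (Or.inl rfl) (X2 i - X2 j + tz) hM) hfar
      have hρ : (shape3 i j hij 1 (Or.inl rfl) (X2 i - X2 j + tz) hM).ρ X2 = X1 := by
        show (fun m => if m = i then X2 j + 1 * (X2 i - X2 j + tz)
          else if m = j then X2 i - 1 * (X2 i - X2 j + tz) else X2 m) = X1
        funext m
        by_cases hmi : m = i
        · rw [hmi]; rw [if_pos rfl]; omega
        · by_cases hmj : m = j
          · rw [hmj]; rw [if_neg hij.symm, if_pos rfl]
            omega
          · rw [if_neg hmi, if_neg hmj]; exact (hk m hmi hmj).symm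
      rwa [hρ] at hmain
    · have hM : (0:ℤ) ≤ -(X2 i - X2 j + tz) := by
        have := sign_aux_pos hprod htpos
        omega
      have hfar : (shape3 i j hij (-1) (Or.inr rfl) (-(X2 i - X2 j + tz)) hM).M
          < 2 * (shape3 i j hij (-1) (Or.inr rfl) (-(X2 i - X2 j + tz)) hM).L X2 := by
        show 2 * (-(X2 i - X2 j + tz)) < 2 * ((-1) * (X2 i - X2 j))
        omega
      have hmain := reflect_mono hd hn hpair
        (shape3 i j hij (-1) (Or.inr rfl) (-(X2 i - X2 j + tz)) hM) hfar
      have hρ : (shape3 i j hij (-1) (Or.inr rfl) (-(X2 i - X2 j + tz)) hM).ρ X2 = X1 := by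
        show (fun m => if m = i then X2 j + (-1) * (-(X2 i - X2 j + tz))
          else if m = j then X2 i - (-1) * (-(X2 i - X2 j + tz)) else X2 m) = X1
        funext m
        by_cases hmi : m = i
        · rw [hmi]; rw [if_pos rfl]; omega
        · by_cases hmj : m = j
          · rw [hmj]; rw [if_neg hij.symm, if_pos rfl]
            omega
          · rw [if_neg hmi, if_neg hmj]; exact (hk m hmi hmj).symm
      rwa [hρ] at hmain

end Glue

/-- Directional monotonicity for the boundary sandpile. Let
`n, κ > 0` and let `(V, u)` be the stabilizing pair of `BS(n·δ₀, κ)` (`u` extended by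
`0` outside `V`). Then for every `e ∈ 𝒩` and all `X₁, X₂ ∈ ℤ^d` such that `X₁ - X₂`
is a nonzero real multiple of `e`, if `|X₁| ≤ |X₂|` (Euclidean norm) then
`u(X₁) ≥ u(X₂)`. -/
theorem stmt8 {d : ℕ} (hd : 2 ≤ d) (n κ : ℝ) (hn : 0 < n) (hκ : 0 < κ)
    (V : Set (Site d)) (u : Site d → ℝ)
    (hpair : IsMinStabilizingPair (pointMass d n) κ V u) :
    ∀ e ∈ dirN d, ∀ X1 X2 : Site d,
      (∃ t : ℝ, t ≠ 0 ∧ ∀ i, ((X1 i - X2 i : ℤ) : ℝ) = t * ((e i : ℤ) : ℝ)) →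
      enorm X1 ≤ enorm X2 → u X2 ≤ u X1 := by
  exact stmt8' hd n κ hn hκ V u hpair

end Sandpile
end

section
/- (Directional monotonicity for the Abelian sandpile) Let d ≥ 2, n ∈ ℕ, and let u_n : ℤ^d → ℤ_{≥0} be the Abelian sandpile odometer for n chips at the origin, i.e. the pointwise least element of W_n = {w : ℤ^d → ℤ_{≥0} : n·δ₀(x) + 2d·Δw(x) ≤ 2d − 1 for all x ∈ ℤ^d}. Then for every e ∈ 𝒩 and all X₁, X₂ ∈ ℤ^d such that X₁ − X₂ is a nonzero real multiple of e, if |X₁| ≤ |X₂| then u_n(X₁) ≥ u_n(X₂), where |·| is the Euclidean norm. -/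
open Filter

namespace Sandpile

/-- Membership in the class `W_n` of the least action principle for the Abelian
sandpile: `w : ℤ^d → ℤ_{≥0}` with `n·δ₀(x) + 2d·Δw(x) ≤ 2d - 1` for all `x ∈ ℤ^d`. -/
def InASMClass (d n : ℕ) (w : Site d → ℕ) : Prop :=
  ∀ x : Site d,
    (n : ℝ) * (if x = 0 then 1 else 0) +
      2 * (d : ℝ) * lap (fun y => (w y : ℝ)) x ≤ 2 * (d : ℝ) - 1

section Aux
variable {d : ℕ}

def nsum (f : Site d → ℤ) (x : Site d) : ℤ :=
  ∑ k : Fin d, (f (x + Pi.single k 1) + f (x - Pi.single k 1))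

def IntClass (d n : ℕ) (w : Site d → ℕ) : Prop :=
  ∀ x : Site d, (if x = 0 then (n : ℤ) else 0) + nsum (fun y => (w y : ℤ)) x
      ≤ 2 * d * (w x : ℤ) + (2 * (d : ℤ) - 1)

lemma intClass_iff (hd : 0 < d) (n : ℕ) (w : Site d → ℕ) :
    InASMClass d n w ↔ IntClass d n w := by
  have hd0 : (2 * (d : ℝ)) ≠ 0 := by
    have : (0:ℝ) < d := by exact_mod_cast hd
    positivity
  unfold InASMClass IntClass
  refine forall_congr' fun x => ?_
  have hlap : 2 * (d : ℝ) * lap (fun y => (w y : ℝ)) x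
      = (∑ k : Fin d, (((w (x + Pi.single k 1) : ℝ)) + (w (x - Pi.single k 1) : ℝ)))
        - 2 * d * (w x : ℝ) := by
    unfold lap
    rw [← mul_assoc, mul_one_div, div_self hd0, one_mul]
    rw [show (∑ k : Fin d, (((w (x + Pi.single k 1) : ℝ) - w x) + ((w (x - Pi.single k 1) : ℝ) - w x)))
        = ∑ k : Fin d, ((((w (x + Pi.single k 1) : ℝ)) + (w (x - Pi.single k 1) : ℝ)) - 2 * (w x : ℝ))
        from Finset.sum_congr rfl fun k _ => by ring]
    rw [Finset.sum_sub_distrib, Finset.sum_const, Finset.card_univ, Fintype.card_fin,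
      nsmul_eq_mul]
    ring
  rw [hlap]
  have hif : (↑n * if x = 0 then (1:ℝ) else 0) = (((if x = 0 then (n : ℤ) else 0) : ℤ) : ℝ) := by
    split_ifs <;> simp
  have hS : (∑ k : Fin d, (((w (x + Pi.single k 1) : ℝ)) + (w (x - Pi.single k 1) : ℝ)))
      = ((nsum (fun y => (w y : ℤ)) x : ℤ) : ℝ) := by
    unfold nsum; push_cast; rfl
  rw [hif, hS]
  rw [show ((if x = 0 then (n : ℤ) else 0) + nsum (fun y => (w y : ℤ)) x
      ≤ 2 * d * (w x : ℤ) + (2 * (d : ℤ) - 1)) ↔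
      (((if x = 0 then (n : ℤ) else 0) + nsum (fun y => (w y : ℤ)) x : ℤ) : ℝ)
      ≤ ((2 * d * (w x : ℤ) + (2 * (d : ℤ) - 1) : ℤ) : ℝ) from (Int.cast_le).symm]
  push_cast
  constructor <;> intro h <;> linarith

/-! ### Reflections -/

def vv (i j : Fin d) (a b : ℤ) : Site d :=
  fun k => (if k = i then a else 0) + (if k = j then b else 0)

def LL (i j : Fin d) (a b : ℤ) (x : Site d) : ℤ := a * x i + b * x j

def refl (i j : Fin d) (a b s : ℤ) (x : Site d) : Site d :=
  fun k => x k - ((2 * LL i j a b x - s) / (1 + b * b)) * vv i j a b k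

section Refl
variable (i j : Fin d) (a b s : ℤ)

lemma vv_i (hij : i ≠ j) : vv i j a b i = a := by simp [vv, hij]

lemma vv_j (hij : i ≠ j) : vv i j a b j = b := by simp [vv, Ne.symm hij]

lemma vv_other {k : Fin d} (hki : k ≠ i) (hkj : k ≠ j) : vv i j a b k = 0 := by
  simp [vv, hki, hkj]

lemma single_apply' (k m : Fin d) (c : ℤ) :
    (Pi.single k c : Site d) m = if m = k then c else 0 :=
  Pi.single_apply k c m

lemma qq_pos (hb : b = -1 ∨ b = 0 ∨ b = 1) : 0 < 1 + b * b := by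
  rcases hb with h|h|h <;> simp [h]

lemma qq_cases (hb : b = -1 ∨ b = 0 ∨ b = 1) : 1 + b * b = 1 ∨ 1 + b * b = 2 := by
  rcases hb with h|h|h <;> simp [h]

lemma LL_add_single (hij : i ≠ j) (x : Site d) (k : Fin d) (c : ℤ) :
    LL i j a b (x + Pi.single k c) = LL i j a b x + c * vv i j a b k := by
  unfold LL
  have h1 : (x + (Pi.single k c : Site d)) i = x i + (Pi.single k c : Site d) i := rfl
  have h2 : (x + (Pi.single k c : Site d)) j = x j + (Pi.single k c : Site d) j := rfl
  rw [h1, h2, single_apply', single_apply']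
  rcases eq_or_ne k i with rfl | hki
  · rw [vv_i _ _ _ _ hij, if_pos rfl, if_neg (Ne.symm hij)]; ring
  · rcases eq_or_ne k j with rfl | hkj
    · rw [vv_j _ _ _ _ hij, if_pos rfl, if_neg hij]; ring
    · rw [vv_other _ _ _ _ hki hkj, if_neg (Ne.symm hki), if_neg (Ne.symm hkj)]; ring

lemma dvd_twoLL (hb : b = -1 ∨ b = 0 ∨ b = 1) (x : Site d) :
    (1 + b * b) ∣ 2 * LL i j a b x := by
  rcases hb with h|h|h
  · exact ⟨LL i j a b x, by rw [h]; ring⟩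
  · simp [h]
  · exact ⟨LL i j a b x, by rw [h]; ring⟩

lemma dvd_c (hb : b = -1 ∨ b = 0 ∨ b = 1) (hdvd : (1 + b * b) ∣ s) (x : Site d) :
    (1 + b * b) ∣ (2 * LL i j a b x - s) :=
  dvd_sub (dvd_twoLL i j a b hb x) hdvd

lemma coeff_spec (hb : b = -1 ∨ b = 0 ∨ b = 1) (hdvd : (1 + b * b) ∣ s) (x : Site d) :
    (1 + b * b) * ((2 * LL i j a b x - s) / (1 + b * b)) = 2 * LL i j a b x - s :=
  Int.mul_ediv_cancel' (dvd_c i j a b s hb hdvd x)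

lemma LL_vv (hij : i ≠ j) (ha : a = 1 ∨ a = -1) :
    LL i j a b (vv i j a b) = 1 + b * b := by
  unfold LL
  rw [vv_i _ _ _ _ hij, vv_j _ _ _ _ hij]
  rcases ha with h|h <;> rw [h] <;> ring

lemma LL_refl (hij : i ≠ j) (ha : a = 1 ∨ a = -1) (hb : b = -1 ∨ b = 0 ∨ b = 1)
    (hdvd : (1 + b * b) ∣ s) (x : Site d) :
    LL i j a b (refl i j a b s x) = s - LL i j a b x := by
  have h : LL i j a b (refl i j a b s x)
      = a * (x i - ((2 * LL i j a b x - s) / (1 + b * b)) * vv i j a b i)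
        + b * (x j - ((2 * LL i j a b x - s) / (1 + b * b)) * vv i j a b j) := rfl
  rw [h, vv_i i j a b hij, vv_j i j a b hij]
  have haa : a * a + b * b = 1 + b * b := by rcases ha with h'|h' <;> rw [h'] <;> ring
  have h3 : a * (x i - (2 * LL i j a b x - s) / (1 + b * b) * a)
      + b * (x j - (2 * LL i j a b x - s) / (1 + b * b) * b)
      = LL i j a b x - (a * a + b * b) * ((2 * LL i j a b x - s) / (1 + b * b)) := by
    unfold LL; ring
  rw [h3, haa, coeff_spec i j a b s hb hdvd x]
  ring

lemma refl_refl (hij : i ≠ j) (ha : a = 1 ∨ a = -1) (hb : b = -1 ∨ b = 0 ∨ b = 1)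
    (hdvd : (1 + b * b) ∣ s) (x : Site d) :
    refl i j a b s (refl i j a b s x) = x := by
  have h1 : (2 * LL i j a b (refl i j a b s x) - s) = -(2 * LL i j a b x - s) := by
    rw [LL_refl i j a b s hij ha hb hdvd x]; ring
  funext k
  have houter : refl i j a b s (refl i j a b s x) k
      = refl i j a b s x k
        - ((2 * LL i j a b (refl i j a b s x) - s) / (1 + b * b)) * vv i j a b k := rfl
  have hinner : refl i j a b s x k
      = x k - ((2 * LL i j a b x - s) / (1 + b * b)) * vv i j a b k := rfl
  rw [houter, h1, Int.neg_ediv_of_dvd (dvd_c i j a b s hb hdvd x), hinner]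
  ring

lemma refl_fixed (hb : b = -1 ∨ b = 0 ∨ b = 1) (x : Site d) (h : 2 * LL i j a b x = s) :
    refl i j a b s x = x := by
  funext k
  unfold refl
  rw [h, sub_self, Int.zero_ediv]
  ring

lemma dvd_2cv (hb : b = -1 ∨ b = 0 ∨ b = 1) (c z : ℤ) :
    (1 + b * b) ∣ 2 * (c * z) := by
  rcases qq_cases b hb with h|h
  · rw [h]; exact one_dvd _
  · rw [h]; exact ⟨c * z, by ring⟩

lemma refl_apply (x : Site d) (m : Fin d) :
    refl i j a b s x m
      = x m - ((2 * LL i j a b x - s) / (1 + b * b)) * vv i j a b m := rfl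

lemma refl_add_single (hij : i ≠ j) (hb : b = -1 ∨ b = 0 ∨ b = 1)
    (hdvd : (1 + b * b) ∣ s) (x : Site d) (k : Fin d) (c : ℤ) (m : Fin d) :
    refl i j a b s (x + Pi.single k c) m
      = refl i j a b s x m
          + ((Pi.single k c : Site d) m
            - ((2 * (c * vv i j a b k)) / (1 + b * b)) * vv i j a b m) := by
  have hq0 : (1 + b * b) ≠ 0 := (qq_pos b hb).ne'
  obtain ⟨p, hp⟩ := dvd_c i j a b s hb hdvd x
  obtain ⟨r, hr⟩ := dvd_2cv b hb c (vv i j a b k)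
  have hsplit : (2 * LL i j a b (x + Pi.single k c) - s) = (1 + b * b) * (p + r) := by
    rw [LL_add_single i j a b hij x k c]
    have : 2 * (LL i j a b x + c * vv i j a b k) - s
        = (2 * LL i j a b x - s) + 2 * (c * vv i j a b k) := by ring
    rw [this, hp, hr]; ring
  rw [refl_apply, refl_apply, hsplit, Int.mul_ediv_cancel_left _ hq0]
  have h2 : (2 * LL i j a b x - s) / (1 + b * b) = p := by
    rw [hp, Int.mul_ediv_cancel_left _ hq0]
  have h3 : (2 * (c * vv i j a b k)) / (1 + b * b) = r := by
    rw [hr, Int.mul_ediv_cancel_left _ hq0]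
  rw [h2, h3, Pi.add_apply]
  ring

lemma refl_add_single_zero (hij : i ≠ j) (hb : b = -1 ∨ b = 0 ∨ b = 1)
    (hdvd : (1 + b * b) ∣ s) (x : Site d) (k : Fin d) (c : ℤ)
    (hvk : vv i j a b k = 0) :
    refl i j a b s (x + Pi.single k c) = refl i j a b s x + Pi.single k c := by
  funext m
  rw [refl_add_single i j a b s hij hb hdvd x k c m, hvk, Pi.add_apply]
  simp

lemma vv_b0 (hb0 : b = 0) {m : Fin d} (hmi : m ≠ i) : vv i j a b m = 0 := by
  rcases eq_or_ne m j with rfl | hmj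
  · simp [vv, hmi, hb0]
  · simp [vv, hmi, hmj]

lemma refl_add_single_i_b0 (hij : i ≠ j) (ha : a = 1 ∨ a = -1) (hb0 : b = 0)
    (hdvd : (1 + b * b) ∣ s) (x : Site d) (c : ℤ) :
    refl i j a b s (x + Pi.single i c) = refl i j a b s x + Pi.single i (-c) := by
  have hb : b = -1 ∨ b = 0 ∨ b = 1 := Or.inr (Or.inl hb0)
  funext m
  rw [refl_add_single i j a b s hij hb hdvd x i c m, Pi.add_apply, vv_i i j a b hij,
    single_apply', single_apply']
  have hdd : (2 * (c * a)) / (1 + b * b) = 2 * (c * a) := by rw [hb0]; norm_num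
  rw [hdd]
  by_cases hmi : m = i
  · subst hmi
    rw [if_pos rfl, if_pos rfl, vv_i m j a b hij]
    rcases ha with h'|h' <;> rw [h'] <;> ring
  · rw [if_neg hmi, if_neg hmi, vv_b0 i j a b hb0 hmi]
    ring

lemma refl_add_single_i_q2 (hij : i ≠ j) (ha : a = 1 ∨ a = -1) (hb1 : b * b = 1)
    (hdvd : (1 + b * b) ∣ s) (x : Site d) (c : ℤ) :
    refl i j a b s (x + Pi.single i c) = refl i j a b s x + Pi.single j (-(c * a * b)) := by
  have hb : b = -1 ∨ b = 0 ∨ b = 1 := by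
    rcases Int.eq_one_or_neg_one_of_mul_eq_one' hb1 with ⟨h, _⟩ | ⟨h, _⟩
    · right; right; exact h
    · left; exact h
  funext m
  rw [refl_add_single i j a b s hij hb hdvd x i c m, Pi.add_apply, vv_i i j a b hij,
    single_apply', single_apply']
  have hdd : (2 * (c * a)) / (1 + b * b) = c * a := by
    rw [hb1]; norm_num [Int.mul_ediv_cancel_left]
  rw [hdd]
  by_cases hmi : m = i
  · subst hmi
    rw [if_pos rfl, if_neg hij, vv_i m j a b hij]
    rcases ha with h'|h' <;> rw [h'] <;> ring
  · rw [if_neg hmi]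
    by_cases hmj : m = j
    · subst hmj
      rw [if_pos rfl, vv_j i m a b hij]; ring
    · rw [if_neg hmj, vv_other i j a b hmi hmj]; ring

lemma refl_add_single_j_q2 (hij : i ≠ j) (ha : a = 1 ∨ a = -1) (hb1 : b * b = 1)
    (hdvd : (1 + b * b) ∣ s) (x : Site d) (c : ℤ) :
    refl i j a b s (x + Pi.single j c) = refl i j a b s x + Pi.single i (-(c * a * b)) := by
  have hb : b = -1 ∨ b = 0 ∨ b = 1 := by
    rcases Int.eq_one_or_neg_one_of_mul_eq_one' hb1 with ⟨h, _⟩ | ⟨h, _⟩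
    · right; right; exact h
    · left; exact h
  funext m
  rw [refl_add_single i j a b s hij hb hdvd x j c m, Pi.add_apply, vv_j i j a b hij,
    single_apply', single_apply']
  have hdd : (2 * (c * b)) / (1 + b * b) = c * b := by
    rw [hb1]; norm_num [Int.mul_ediv_cancel_left]
  rw [hdd]
  by_cases hmi : m = i
  · subst hmi
    rw [if_neg hij, if_pos rfl, vv_i m j a b hij]
    ring
  · rw [if_neg hmi]
    by_cases hmj : m = j
    · subst hmj
      rw [if_pos rfl, vv_j i m a b hij]
      linear_combination (-c) * hb1
    · rw [if_neg hmj, vv_other i j a b hmi hmj]; ring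

lemma sub_single_eq (z : Site d) (k : Fin d) :
    z - Pi.single k 1 = z + Pi.single k (-1) := by
  funext m
  rw [Pi.sub_apply, Pi.add_apply, single_apply', single_apply']
  split_ifs <;> ring

lemma bsq_one (hb : b = -1 ∨ b = 0 ∨ b = 1) (hb0 : b ≠ 0) : b * b = 1 := by
  rcases hb with h|h|h
  · rw [h]; ring
  · exact absurd h hb0
  · rw [h]; ring

lemma nsum_refl (hij : i ≠ j) (ha : a = 1 ∨ a = -1) (hb : b = -1 ∨ b = 0 ∨ b = 1)
    (hdvd : (1 + b * b) ∣ s) (f : Site d → ℤ) (x : Site d) :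
    nsum (fun y => f (refl i j a b s y)) x = nsum f (refl i j a b s x) := by
  unfold nsum
  have hsub : ∀ (z : Site d) (k : Fin d), z - Pi.single k 1 = z + Pi.single k (-1) :=
    sub_single_eq
  simp only [hsub]
  set g : Fin d → ℤ := fun m =>
    f (refl i j a b s x + Pi.single m 1) + f (refl i j a b s x + Pi.single m (-1)) with hg
  by_cases hb0 : b = 0
  · have hterm : ∀ k : Fin d,
        f (refl i j a b s (x + Pi.single k 1)) + f (refl i j a b s (x + Pi.single k (-1)))
          = g k := by
      intro k
      by_cases hki : k = i
      · subst hki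
        rw [refl_add_single_i_b0 k j a b s hij ha hb0 hdvd x 1,
          refl_add_single_i_b0 k j a b s hij ha hb0 hdvd x (-1)]
        rw [hg]
        simp only [neg_neg]
        exact add_comm _ _
      · rw [refl_add_single_zero i j a b s hij hb hdvd x k 1 (vv_b0 i j a b hb0 hki),
          refl_add_single_zero i j a b s hij hb hdvd x k (-1) (vv_b0 i j a b hb0 hki)]
    simp only [hterm]
  · have hb1 : b * b = 1 := bsq_one b hb hb0
    have hterm : ∀ k : Fin d,
        f (refl i j a b s (x + Pi.single k 1)) + f (refl i j a b s (x + Pi.single k (-1)))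
          = g (Equiv.swap i j k) := by
      intro k
      by_cases hki : k = i
      · subst hki
        rw [refl_add_single_i_q2 k j a b s hij ha hb1 hdvd x 1,
          refl_add_single_i_q2 k j a b s hij ha hb1 hdvd x (-1),
          Equiv.swap_apply_left, hg]
        have hab : a * b = 1 ∨ a * b = -1 := by
          rcases ha with h'|h' <;> rcases hb with h''|h''|h'' <;>
            first
              | exact absurd h'' hb0
              | (rw [h', h'']; norm_num)
        rcases hab with h'|h'
        · rw [show (-(1 * a * b)) = -(a*b) by ring, show (-(-1 * a * b)) = a*b by ring, h']
          exact add_comm _ _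
        · rw [show (-(1 * a * b)) = -(a*b) by ring, show (-(-1 * a * b)) = a*b by ring, h']
          simp only [neg_neg]
      · by_cases hkj : k = j
        · subst hkj
          rw [refl_add_single_j_q2 i k a b s hij ha hb1 hdvd x 1,
            refl_add_single_j_q2 i k a b s hij ha hb1 hdvd x (-1),
            Equiv.swap_apply_right, hg]
          have hab : a * b = 1 ∨ a * b = -1 := by
            rcases ha with h'|h' <;> rcases hb with h''|h''|h'' <;>
              first
                | exact absurd h'' hb0
                | (rw [h', h'']; norm_num)
          rcases hab with h'|h'
          · rw [show (-(1 * a * b)) = -(a*b) by ring, show (-(-1 * a * b)) = a*b by ring, h']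
            exact add_comm _ _
          · rw [show (-(1 * a * b)) = -(a*b) by ring, show (-(-1 * a * b)) = a*b by ring, h']
            simp only [neg_neg]
        · have hvk : vv i j a b k = 0 := vv_other i j a b hki hkj
          rw [refl_add_single_zero i j a b s hij hb hdvd x k 1 hvk,
            refl_add_single_zero i j a b s hij hb hdvd x k (-1) hvk,
            Equiv.swap_apply_of_ne_of_ne hki hkj]
    simp only [hterm]
    exact Equiv.sum_comp (Equiv.swap i j) g

lemma LL_zero (i j : Fin d) (a b : ℤ) : LL i j a b 0 = 0 := by
  unfold LL
  show a * (0:ℤ) + b * (0:ℤ) = 0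
  ring

lemma vv_cases (i j : Fin d) (a b : ℤ) (hij : i ≠ j) (k : Fin d) :
    vv i j a b k = a ∨ vv i j a b k = b ∨ vv i j a b k = 0 := by
  by_cases hki : k = i
  · subst hki; left; rw [vv_i k j a b hij]
  · by_cases hkj : k = j
    · subst hkj; right; left; rw [vv_j i k a b hij]
    · right; right; exact vv_other i j a b hki hkj

lemma cvv_bounds (i j : Fin d) (a b : ℤ) (hij : i ≠ j) (ha : a = 1 ∨ a = -1)
    (hb : b = -1 ∨ b = 0 ∨ b = 1) (k : Fin d) (c : ℤ) (hc : c = 1 ∨ c = -1) :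
    -1 ≤ c * vv i j a b k ∧ c * vv i j a b k ≤ 1 := by
  rcases vv_cases i j a b hij k with h|h|h <;> rw [h] <;>
    rcases ha with rfl|rfl <;> rcases hb with rfl|rfl|rfl <;>
      rcases hc with rfl|rfl <;> omega

lemma intClass_w (i j : Fin d) (a b s : ℤ) (hij : i ≠ j) (ha : a = 1 ∨ a = -1)
    (hb : b = -1 ∨ b = 0 ∨ b = 1) (hs : 0 ≤ s) (hdvd : (1 + b * b) ∣ s)
    (n : ℕ) (u : Site d → ℕ) (hu : IntClass d n u) :
    IntClass d n (fun y => if s < 2 * LL i j a b y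
      then min (u y) (u (refl i j a b s y)) else u y) := by
  intro x
  set w : Site d → ℕ := fun y => if s < 2 * LL i j a b y
      then min (u y) (u (refl i j a b s y)) else u y with hw
  have hwle : ∀ y : Site d, ((w y : ℕ) : ℤ) ≤ (u y : ℤ) := by
    intro y
    rw [hw]
    by_cases hyf : s < 2 * LL i j a b y
    · simp only [if_pos hyf]
      exact_mod_cast Nat.cast_le.mpr (min_le_left _ _)
    · simp only [if_neg hyf]
      exact le_rfl
  -- main case split
  by_cases hcase : s < 2 * LL i j a b x ∧ u (refl i j a b s x) < u x
  · obtain ⟨hfar, hlt⟩ := hcase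
    have hwx : w x = u (refl i j a b s x) := by
      rw [hw]; simp only [if_pos hfar]
      exact min_eq_right hlt.le
    have hx0 : x ≠ 0 := by
      intro h
      rw [h, LL_zero] at hfar
      omega
    rw [if_neg hx0]
    have hkey : ∀ (k : Fin d) (c : ℤ), c = 1 ∨ c = -1 →
        ((w (x + Pi.single k c) : ℕ) : ℤ) ≤ (u (refl i j a b s (x + Pi.single k c)) : ℤ) := by
      intro k c hc
      by_cases hyf : s < 2 * LL i j a b (x + Pi.single k c)
      · rw [hw]
        simp only [if_pos hyf]
        exact_mod_cast Nat.cast_le.mpr (min_le_right _ _)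
      · have hwy : w (x + Pi.single k c) = u (x + Pi.single k c) := by
          rw [hw]; simp only [if_neg hyf]
        rw [hwy]
        have hLy := LL_add_single i j a b hij x k c
        obtain ⟨h1, h2⟩ := cvv_bounds i j a b hij ha hb k c hc
        have hLy2 : 2 * LL i j a b (x + Pi.single k c)
            = 2 * LL i j a b x + 2 * (c * vv i j a b k) := by rw [hLy]; ring
        obtain ⟨cv, hcv⟩ : ∃ cv : ℤ, cv = c * vv i j a b k := ⟨_, rfl⟩
        rw [← hcv] at h1 h2 hLy2
        push_neg at hyf
        have hcases : 2 * LL i j a b (x + Pi.single k c) = s ∨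
            2 * LL i j a b (x + Pi.single k c) = s - 1 := by
          have hA := hyf
          have hB := hfar
          generalize hgA : LL i j a b (x + Pi.single k c) = A at hA hLy2 ⊢
          generalize hgB : LL i j a b x = B at hB hLy2
          omega
        rcases hcases with hcs | hcs
        · rw [refl_fixed i j a b s hb _ hcs]
        · -- odd case: q = 1, b = 0
          have hb0 : b = 0 := by
            rcases qq_cases b hb with hq | hq
            · have hbb : b * b = 0 := by linarith
              exact mul_self_eq_zero.mp hbb
            · exfalso
              obtain ⟨m, hm⟩ := hdvd
              rw [hq] at hm
              omega
          have hcvk : c * vv i j a b k = -1 := by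
            rw [← hcv]
            have hA := hyf
            have hB := hfar
            have hcs2 := hcs
            generalize hgA : LL i j a b (x + Pi.single k c) = A at hA hLy2 hcs2
            generalize hgB : LL i j a b x = B at hB hLy2
            omega
          have h2Lx : 2 * LL i j a b x - s = 1 := by
            have hA := hyf
            have hB := hfar
            have hcs2 := hcs
            have hcvk2 := hcvk
            rw [← hcv] at hcvk2
            generalize hgA : LL i j a b (x + Pi.single k c) = A at hA hLy2 hcs2
            generalize hgB : LL i j a b x = B at hB hLy2 ⊢
            omega
          -- y = refl x
          have hyrefl : x + Pi.single k c = refl i j a b s x := by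
            have hki : k = i := by
              by_cases hki : k = i
              · exact hki
              · exfalso
                rw [vv_b0 i j a b hb0 hki] at hcvk
                omega
            rw [hki] at hcvk
            rw [hki]
            rw [vv_i i j a b hij] at hcvk
            funext m
            rw [Pi.add_apply, refl_apply, h2Lx, single_apply']
            have hq1 : (1:ℤ) + b * b = 1 := by rw [hb0]; ring
            rw [hq1, Int.ediv_one, one_mul]
            by_cases hmi : m = i
            · rw [if_pos hmi, hmi, vv_i i j a b hij]
              rcases ha with rfl | rfl <;> omega
            · rw [if_neg hmi, vv_b0 i j a b hb0 hmi]
              ring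
          rw [hyrefl, refl_refl i j a b s hij ha hb hdvd]
          exact_mod_cast Nat.cast_le.mpr hlt.le
    have hsum : nsum (fun y => ((w y : ℕ) : ℤ)) x
        ≤ nsum (fun y => (u (refl i j a b s y) : ℤ)) x := by
      unfold nsum
      apply Finset.sum_le_sum
      intro k _
      have h1 := hkey k 1 (Or.inl rfl)
      have h2 := hkey k (-1) (Or.inr rfl)
      rw [sub_single_eq]
      exact add_le_add h1 h2
    have htrans := nsum_refl i j a b s hij ha hb hdvd (fun y => (u y : ℤ)) x
    have hu2 := hu (refl i j a b s x)
    have hdelta : (0:ℤ) ≤ (if refl i j a b s x = 0 then (n:ℤ) else 0) := by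
      split_ifs <;> simp
    rw [hwx]
    calc (0:ℤ) + nsum (fun y => ((w y : ℕ) : ℤ)) x
        ≤ nsum (fun y => (u (refl i j a b s y) : ℤ)) x := by rw [zero_add]; exact hsum
      _ = nsum (fun y => (u y : ℤ)) (refl i j a b s x) := htrans
      _ ≤ 2 * d * (u (refl i j a b s x) : ℤ) + (2 * (d:ℤ) - 1) := by omega
  · -- w x = u x
    have hwx : w x = u x := by
      rw [hw]
      by_cases hfar : s < 2 * LL i j a b x
      · simp only [if_pos hfar]
        push_neg at hcase
        exact min_eq_left (hcase hfar)
      · simp only [if_neg hfar]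
    have hsum : nsum (fun y => ((w y : ℕ) : ℤ)) x ≤ nsum (fun y => (u y : ℤ)) x := by
      unfold nsum
      exact Finset.sum_le_sum fun k _ => add_le_add (hwle _) (hwle _)
    have hu1 := hu x
    rw [hwx]
    omega

lemma refl_mono (hd : 0 < d) (i j : Fin d) (a b s : ℤ) (hij : i ≠ j)
    (ha : a = 1 ∨ a = -1) (hb : b = -1 ∨ b = 0 ∨ b = 1) (hs : 0 ≤ s)
    (hdvd : (1 + b * b) ∣ s) (n : ℕ) (u : Site d → ℕ) (hu : InASMClass d n u)
    (hleast : ∀ w : Site d → ℕ, InASMClass d n w → ∀ x, u x ≤ w x)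
    (x : Site d) (hx : s < 2 * LL i j a b x) :
    u x ≤ u (refl i j a b s x) := by
  have huI : IntClass d n u := (intClass_iff hd n u).1 hu
  have hwI := intClass_w i j a b s hij ha hb hs hdvd n u huI
  have hwA : InASMClass d n (fun y => if s < 2 * LL i j a b y
      then min (u y) (u (refl i j a b s y)) else u y) := (intClass_iff hd n _).2 hwI
  have h := hleast _ hwA x
  simp only [if_pos hx] at h
  exact le_trans h (min_le_right _ _)

lemma mono_assemble (hd : 0 < d) (i j : Fin d) (hij : i ≠ j) (a b : ℤ)
    (ha : a = 1 ∨ a = -1) (hb : b = -1 ∨ b = 0 ∨ b = 1) (T s : ℤ)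
    (hT : T < 0) (hs : 0 ≤ s) (hdvd : (1 + b * b) ∣ s)
    (n : ℕ) (u : Site d → ℕ) (hu : InASMClass d n u)
    (hleast : ∀ w : Site d → ℕ, InASMClass d n w → ∀ x, u x ≤ w x)
    (X1 X2 : Site d)
    (h2L : 2 * LL i j a b X2 = s - T * (1 + b * b))
    (hX : ∀ k, X1 k = X2 k + T * vv i j a b k) :
    u X2 ≤ u X1 := by
  have hq := qq_pos b hb
  have hfar : s < 2 * LL i j a b X2 := by
    have hpos : 0 < (-T) * (1 + b * b) := mul_pos (by omega) hq
    have : T * (1 + b * b) = -((-T) * (1 + b * b)) := by ring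
    rw [h2L, this]
    omega
  have hmono := refl_mono hd i j a b s hij ha hb hs hdvd n u hu hleast X2 hfar
  have heq : refl i j a b s X2 = X1 := by
    funext m
    rw [refl_apply]
    have hcoef : (2 * LL i j a b X2 - s) = (1 + b * b) * (-T) := by rw [h2L]; ring
    rw [hcoef, Int.mul_ediv_cancel_left _ hq.ne', hX m]
    ring
  rwa [heq] at hmono

lemma sum_vv_mul (i j : Fin d) (hij : i ≠ j) (a b : ℤ) (z : Site d) :
    ∑ k : Fin d, vv i j a b k * z k = a * z i + b * z j := by
  have h : ∀ k : Fin d, vv i j a b k * z k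
      = (if k = i then a * z k else 0) + (if k = j then b * z k else 0) := by
    intro k
    unfold vv
    split_ifs <;> ring
  rw [Finset.sum_congr rfl fun k _ => h k, Finset.sum_add_distrib,
    Finset.sum_ite_eq' Finset.univ i (fun k => a * z k),
    Finset.sum_ite_eq' Finset.univ j (fun k => b * z k)]
  simp

lemma vv_neg (i j : Fin d) (b : ℤ) (k : Fin d) :
    vv i j (-1) (-b) k = - vv i j 1 b k := by
  unfold vv
  split_ifs <;> ring

lemma LL_neg (i j : Fin d) (b : ℤ) (z : Site d) :
    LL i j (-1) (-b) z = - LL i j 1 b z := by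
  unfold LL; ring

lemma stmt9_core (hd : 0 < d) (i j : Fin d) (hij : i ≠ j) (b : ℤ)
    (hb : b = -1 ∨ b = 0 ∨ b = 1)
    (n : ℕ) (u : Site d → ℕ) (hu : InASMClass d n u)
    (hleast : ∀ w : Site d → ℕ, InASMClass d n w → ∀ x, u x ≤ w x)
    (X1 X2 : Site d) (t : ℝ) (ht0 : t ≠ 0)
    (htX : ∀ k, ((X1 k - X2 k : ℤ) : ℝ) = t * ((vv i j 1 b k : ℤ) : ℝ))
    (hnorm : enorm X1 ≤ enorm X2) : u X2 ≤ u X1 := by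
  have ha : (1:ℤ) = 1 ∨ (1:ℤ) = -1 := Or.inl rfl
  have hvvi : vv i j 1 b i = 1 := vv_i i j 1 b hij
  have ht : t = ((X1 i - X2 i : ℤ) : ℝ) := by
    have h := htX i
    rw [hvvi] at h
    push_cast at h ⊢
    linarith
  set T : ℤ := X1 i - X2 i with hTdef
  have hT0 : T ≠ 0 := by
    intro h
    apply ht0
    rw [ht, h]
    simp
  have hX : ∀ k, X1 k = X2 k + T * vv i j 1 b k := by
    intro k
    have h := htX k
    rw [ht] at h
    have h2 : X1 k - X2 k = T * vv i j 1 b k := by exact_mod_cast h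
    linarith
  have hsq : (∑ k, (X1 k)^2 : ℤ) ≤ ∑ k, (X2 k)^2 := by
    have hA : (0:ℝ) ≤ ∑ k, ((X1 k : ℝ))^2 := by positivity
    have hB : (0:ℝ) ≤ ∑ k, ((X2 k : ℝ))^2 := by positivity
    unfold enorm at hnorm
    have h := pow_le_pow_left₀ (Real.sqrt_nonneg _) hnorm 2
    rw [Real.sq_sqrt hA, Real.sq_sqrt hB] at h
    exact_mod_cast h
  set s : ℤ := LL i j 1 b X1 + LL i j 1 b X2 with hsdef
  have hkey : (∑ k, (X1 k)^2 : ℤ) - (∑ k, (X2 k)^2) = T * s := by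
    have h1 : ∀ k : Fin d, (X1 k)^2 - (X2 k)^2 = T * (vv i j 1 b k * ((X1 + X2) k)) := by
      intro k
      have hadd : (X1 + X2) k = X1 k + X2 k := rfl
      rw [hadd, hX k]
      ring
    have h2 : (∑ k, (X1 k)^2 : ℤ) - (∑ k, (X2 k)^2)
        = ∑ k, ((X1 k)^2 - (X2 k)^2) := by rw [Finset.sum_sub_distrib]
    rw [h2, Finset.sum_congr rfl fun k _ => h1 k, ← Finset.mul_sum,
      sum_vv_mul i j hij 1 b (X1 + X2)]
    have hX1 : (X1 + X2) i = X1 i + X2 i := rfl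
    have hX2 : (X1 + X2) j = X1 j + X2 j := rfl
    rw [hX1, hX2, hsdef]
    unfold LL
    ring
  have hTs : T * s ≤ 0 := by omega
  have hLL1 : LL i j 1 b X1 = LL i j 1 b X2 + T * (1 + b * b) := by
    unfold LL
    rw [hX i, hX j, vv_i i j 1 b hij, vv_j i j 1 b hij]
    ring
  have h2L : 2 * LL i j 1 b X2 = s - T * (1 + b * b) := by
    rw [hsdef, hLL1]; ring
  have hdvd : (1 + b * b) ∣ s := by
    rcases qq_cases b hb with hq | hq
    · rw [hq]; exact one_dvd s
    · rw [hq]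
      rw [hq] at h2L
      exact ⟨LL i j 1 b X2 + T, by omega⟩
  rcases lt_trichotomy T 0 with hT | hT | hT
  · have hs : 0 ≤ s := by nlinarith
    exact mono_assemble hd i j hij 1 b ha hb T s hT hs hdvd n u hu hleast X1 X2 h2L hX
  · exact absurd hT hT0
  · have hsneg : s ≤ 0 := by nlinarith
    have hb' : -b = -1 ∨ -b = 0 ∨ -b = 1 := by rcases hb with h|h|h <;> rw [h] <;> simp
    have ha' : (-1:ℤ) = 1 ∨ (-1:ℤ) = -1 := Or.inr rfl
    have hq' : 1 + (-b) * (-b) = 1 + b * b := by ring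
    have hdvd' : (1 + (-b) * (-b)) ∣ (-s) := by
      rw [hq']
      exact Dvd.dvd.neg_right hdvd
    have h2L' : 2 * LL i j (-1) (-b) X2 = (-s) - (-T) * (1 + (-b) * (-b)) := by
      rw [LL_neg]
      linear_combination -h2L
    have hX' : ∀ k, X1 k = X2 k + (-T) * vv i j (-1) (-b) k := by
      intro k
      rw [vv_neg]
      linear_combination hX k
    exact mono_assemble hd i j hij (-1) (-b) ha' hb' (-T) (-s) (by omega) (by omega)
      hdvd' n u hu hleast X1 X2 h2L' hX'

end Refl
end Aux

/-- Directional monotonicity for the Abelian sandpile. Let `d ≥ 2`,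
`n ∈ ℕ`, and let `u_n : ℤ^d → ℤ_{≥0}` be the Abelian sandpile odometer for `n` chips at
the origin, i.e. the pointwise least element of `W_n`. Then for every `e ∈ 𝒩` and all
`X₁, X₂ ∈ ℤ^d` such that `X₁ - X₂` is a nonzero real multiple of `e`, if `|X₁| ≤ |X₂|`
(Euclidean norm) then `u_n(X₁) ≥ u_n(X₂)`. -/
theorem stmt9 {d : ℕ} (hd : 2 ≤ d) (n : ℕ) (u : Site d → ℕ)
    (hu : InASMClass d n u)
    (hleast : ∀ w : Site d → ℕ, InASMClass d n w → ∀ x, u x ≤ w x) :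
    ∀ e ∈ dirN d, ∀ X1 X2 : Site d,
      (∃ t : ℝ, t ≠ 0 ∧ ∀ i, ((X1 i - X2 i : ℤ) : ℝ) = t * ((e i : ℤ) : ℝ)) →
      enorm X1 ≤ enorm X2 → u X2 ≤ u X1 := by
  intro e he X1 X2 hmul hnorm
  obtain ⟨t, ht0, htX⟩ := hmul
  obtain ⟨i, j, hij, hcase⟩ := he
  have hd0 : 0 < d := by omega
  rcases hcase with rfl | rfl | rfl
  · refine stmt9_core hd0 i j hij 0 (Or.inr (Or.inl rfl)) n u hu hleast X1 X2 t ht0 ?_ hnorm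
    intro k
    have hvk : vv i j 1 0 k = (Pi.single i 1 : Site d) k := by
      rw [single_apply']
      unfold vv
      simp
    rw [hvk]
    exact htX k
  · refine stmt9_core hd0 i j hij 1 (Or.inr (Or.inr rfl)) n u hu hleast X1 X2 t ht0 ?_ hnorm
    intro k
    have hvk : vv i j 1 1 k = (Pi.single i 1 + Pi.single j 1 : Site d) k := by
      rw [Pi.add_apply, single_apply', single_apply']
      unfold vv
      simp
    rw [hvk]
    exact htX k
  · refine stmt9_core hd0 i j hij (-1) (Or.inl rfl) n u hu hleast X1 X2 t ht0 ?_ hnorm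
    intro k
    have hvk : vv i j 1 (-1) k = (Pi.single i 1 - Pi.single j 1 : Site d) k := by
      rw [Pi.sub_apply, single_apply', single_apply']
      unfold vv
      split_ifs <;> ring
    rw [hvk]
    exact htX k

end Sandpile
end

section
/- (Monotonicity of the Abelian sandpile scaling limit) Let d ≥ 2 and for each n ∈ ℕ let u_n : ℤ^d → ℤ_{≥0} be the Abelian sandpile odometer for n chips at the origin. Suppose u₀ : ℝ^d ∖ {0} → [0,∞) is continuous and the rescaled odometers converge to u₀ locally uniformly in ℝ^d ∖ {0}: for every compact K ⊆ ℝ^d ∖ {0}, sup {|n^{−2/d}·u_n(ξ) − u₀(n^{−1/d}·ξ)| : ξ ∈ ℤ^d, n^{−1/d}·ξ ∈ K} → 0 as n → ∞. Then for every e ∈ 𝒩 and all x¹, x² ∈ ℝ^d ∖ {0} such that x¹ − x² is a nonzero real multiple of e, if |x¹| ≤ |x²| then u₀(x¹) ≥ u₀(x²). -/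
open Filter

namespace Sandpile

/-- The set of directions `𝒩 ⊆ ℝ^d`. -/
def dirNR (d : ℕ) : Set (Fin d → ℝ) :=
  {v | ∃ i j : Fin d, i ≠ j ∧
    (v = Pi.single i 1 ∨ v = Pi.single i 1 + Pi.single j 1 ∨
      v = Pi.single i 1 - Pi.single j 1)}

/-- Euclidean norm on `ℝ^d`. -/
noncomputable def renorm {d : ℕ} (x : Fin d → ℝ) : ℝ :=
  Real.sqrt (∑ i, (x i) ^ 2)


/-!
Every `e ∈ 𝒩` is, up to sign, an integer vector `v` with `k * |v|² = 2` for an integer `k`, so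
the reflection `x ↦ x - k (v ⬝ᵥ x - c) v` in a lattice hyperplane `v ⬝ᵥ x = c` is a symmetry of
`ℤ^d`: it permutes the unit vectors and therefore commutes with the Laplacian. When the origin lies
on the side `v ⬝ᵥ x ≤ c`, replacing `u_n` by `min u_n (u_n ∘ reflect)` on the other side keeps it
in `W_n`, so by the least action principle `u_n ≤ u_n ∘ reflect` there.

If `x¹ - x²` is parallel to `e` and `|x¹| ≤ |x²|`, then `x¹` is the mirror image of `x²` in the
hyperplane orthogonal to `e` through `(x¹ + x²) / 2`, which separates `x²` from the origin.
Rounding `x²` and this hyperplane to the lattice of spacing `n^{-1/d}` and passing to the scaling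
limit gives `u₀ x² ≤ u₀ x¹`.
-/

open Matrix Topology

variable {d : ℕ}

def unitVecs (d : ℕ) : Finset (Site d) :=
  Finset.univ.image fun p : Fin d × ℤˣ => Pi.single p.1 (p.2 : ℤ)

lemma mem_unitVecs_iff {e : Site d} : e ∈ unitVecs d ↔ e ⬝ᵥ e = 1 := by
  simp only [unitVecs, Finset.mem_image, Finset.mem_univ, true_and]
  constructor
  · rintro ⟨⟨l, s⟩, rfl⟩
    simp
  · intro he
    rw [dotProduct] at he
    have hsq : ∀ m, 0 ≤ e m * e m := fun m => mul_self_nonneg (e m)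
    obtain ⟨l, hl⟩ : ∃ l, e l ≠ 0 := by
      by_contra! h0
      simp [h0] at he
    have hsplit := Finset.add_sum_erase Finset.univ (fun m => e m * e m) (Finset.mem_univ l)
    have hrest_nonneg := Finset.sum_nonneg fun m (_ : m ∈ Finset.univ.erase l) => hsq m
    have hl1 : 1 ≤ e l * e l := by nlinarith [Int.one_le_abs hl, abs_mul_abs_self (e l)]
    have hrest : ∀ m ≠ l, e m = 0 := fun m hm => mul_self_eq_zero.1 <|
      (Finset.sum_eq_zero_iff_of_nonneg fun m _ => hsq m).1 (by linarith) m (by simp [hm])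
    refine ⟨(l, Units.mkOfMulEqOne (e l) (e l) (by linarith)), funext fun m => ?_⟩
    rcases eq_or_ne m l with rfl | hm
    · simp
    · simp [hm, hrest m hm]

lemma sum_unitVecs {M : Type*} [AddCommMonoid M] (g : Site d → M) :
    ∑ e ∈ unitVecs d, g e = ∑ i, (g (Pi.single i 1) + g (-Pi.single i 1)) := by
  rw [unitVecs, Finset.sum_image, Fintype.sum_prod_type]
  · simp [Pi.single_neg]
  · rintro ⟨l, s⟩ - ⟨l', s'⟩ - h
    obtain rfl : l = l' := by
      by_contra hne
      simpa [hne] using congrFun h l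
    simpa [Units.ext_iff] using congrFun h l

lemma lap_eq_sum_unitVecs (f : Site d → ℝ) (x : Site d) :
    lap f x = 1 / (2 * d) * ∑ e ∈ unitVecs d, (f (x + e) - f x) := by
  rw [lap, sum_unitVecs]
  simp [sub_eq_add_neg]

lemma lap_comp_eq_of_map_add {R L : Site d → Site d} (hR : ∀ x e, R (x + e) = R x + L e)
    (hL : ∀ e ∈ unitVecs d, L e ∈ unitVecs d) (hLL : ∀ e, L (L e) = e)
    (f : Site d → ℝ) (x : Site d) : lap (fun y => f (R y)) x = lap f (R x) := by
  simp only [lap_eq_sum_unitVecs, hR]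
  congr 1
  exact Finset.sum_nbij' L L hL hL (fun e _ => hLL e) (fun e _ => hLL e) fun e _ => rfl

lemma lap_le_lap {f g : Site d → ℝ} {x : Site d} (hx : f x = g x)
    (h : ∀ e ∈ unitVecs d, f (x + e) ≤ g (x + e)) : lap f x ≤ lap g x := by
  simp only [lap_eq_sum_unitVecs, hx]
  gcongr with e he
  exact h e he

/-- For `k * (v ⬝ᵥ v) = 2`, the reflection in the hyperplane `v ⬝ᵥ x = c`. -/
def reflect (v : Site d) (k c : ℤ) (x : Site d) : Site d := x - (k * (v ⬝ᵥ x - c)) • v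

section Reflection

variable {v : Site d} {k : ℤ}

lemma dotProduct_reflect (hk : k * (v ⬝ᵥ v) = 2) (c : ℤ) (x : Site d) :
    v ⬝ᵥ reflect v k c x = 2 * c - v ⬝ᵥ x := by
  simp only [reflect, dotProduct_sub, dotProduct_smul, smul_eq_mul]
  linear_combination (c - v ⬝ᵥ x) * hk

lemma reflect_reflect (hk : k * (v ⬝ᵥ v) = 2) (c : ℤ) (x : Site d) :
    reflect v k c (reflect v k c x) = x := by
  rw [reflect, dotProduct_reflect hk, reflect]
  module

lemma reflect_eq_self {c : ℤ} {x : Site d} (hx : v ⬝ᵥ x = c) : reflect v k c x = x := by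
  simp [reflect, hx]

lemma reflect_add (c : ℤ) (x e : Site d) :
    reflect v k c (x + e) = reflect v k c x + reflect v k 0 e := by
  simp only [reflect, dotProduct_add]
  module

lemma reflect_mem_unitVecs (hk : k * (v ⬝ᵥ v) = 2) {e : Site d} (he : e ∈ unitVecs d) :
    reflect v k 0 e ∈ unitVecs d := by
  rw [mem_unitVecs_iff] at he ⊢
  simp only [reflect, sub_zero, dotProduct_sub, sub_dotProduct, dotProduct_smul, smul_dotProduct,
    smul_eq_mul, dotProduct_comm e v]
  linear_combination he + (v ⬝ᵥ e) ^ 2 * k * hk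

lemma lap_comp_reflect (hk : k * (v ⬝ᵥ v) = 2) (c : ℤ) (f : Site d → ℝ) (x : Site d) :
    lap (fun y => f (reflect v k c y)) x = lap f (reflect v k c x) :=
  lap_comp_eq_of_map_add (reflect_add c) (fun _ => reflect_mem_unitVecs hk)
    (reflect_reflect hk 0) f x

lemma abs_dotProduct_le_one (hk : k * (v ⬝ᵥ v) = 2) {e : Site d} (he : e ∈ unitVecs d) :
    |v ⬝ᵥ e| ≤ 1 := by
  simp only [unitVecs, Finset.mem_image, Finset.mem_univ, true_and] at he
  obtain ⟨⟨l, s⟩, rfl⟩ := he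
  have hvl : v l * v l ≤ v ⬝ᵥ v :=
    Finset.single_le_sum (f := fun m => v m * v m) (fun m _ => mul_self_nonneg (v m))
      (Finset.mem_univ l)
  have hvv : 0 ≤ v ⬝ᵥ v := Finset.sum_nonneg fun m _ => mul_self_nonneg (v m)
  have hvv_le : v ⬝ᵥ v ≤ 2 :=
    hk ▸ le_mul_of_one_le_left hvv (pos_of_mul_pos_left (hk ▸ two_pos) hvv)
  rw [dotProduct_single, abs_mul, Int.isUnit_iff_abs_eq.1 s.isUnit, mul_one]
  nlinarith [abs_mul_abs_self (v l), abs_nonneg (v l)]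

end Reflection

lemma inASMClass_apply_of_lap_le {n : ℕ} {f g : Site d → ℝ} {y z : Site d}
    (hz : (n : ℝ) * (if z = 0 then 1 else 0) + 2 * (d : ℝ) * lap g z ≤ 2 * (d : ℝ) - 1)
    (hyz : y = 0 → z = 0) (hlap : lap f y ≤ lap g z) :
    (n : ℝ) * (if y = 0 then 1 else 0) + 2 * (d : ℝ) * lap f y ≤ 2 * (d : ℝ) - 1 := by
  have hδ : (n : ℝ) * (if y = 0 then 1 else 0) ≤ n * (if z = 0 then 1 else 0) := by
    gcongr
    split_ifs <;> simp_all
  have hΔ : 2 * (d : ℝ) * lap f y ≤ 2 * d * lap g z := by gcongr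
  linarith

theorem odometer_le_reflect {n : ℕ} {u : Site d → ℕ} (hu : InASMClass d n u)
    (hleast : ∀ w : Site d → ℕ, InASMClass d n w → ∀ x, u x ≤ w x)
    {v : Site d} {k : ℤ} (hk : k * (v ⬝ᵥ v) = 2) {c : ℤ} (hc : 0 ≤ c)
    {x : Site d} (hx : c < v ⬝ᵥ x) : u x ≤ u (reflect v k c x) := by
  classical
  set w : Site d → ℕ :=
    fun y => if c < v ⬝ᵥ y then min (u y) (u (reflect v k c y)) else u y with hw_def
  have hwu : ∀ y, w y ≤ u y := fun y => by
    by_cases hy : c < v ⬝ᵥ y <;> simp [hw_def, hy]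
  have hw_reflect : ∀ y, c ≤ v ⬝ᵥ y → w y ≤ u (reflect v k c y) := fun y hy => by
    rcases hy.lt_or_eq with hy | hy
    · simp [hw_def, hy]
    · simp only [hw_def, if_neg hy.ge.not_gt, reflect_eq_self hy.symm, le_refl]
  have hw : InASMClass d n w := by
    intro y
    by_cases hy : c < v ⬝ᵥ y ∧ u (reflect v k c y) < u y
    · -- the neighbours of `y` lie in `c ≤ v ⬝ᵥ ·`, where `w ≤ u ∘ reflect`
      refine inASMClass_apply_of_lap_le (hu (reflect v k c y)) (fun hy0 => ?_) ?_
      · simp [hy0] at hy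
        omega
      rw [← lap_comp_reflect hk]
      refine lap_le_lap (by simp [hw_def, hy.1, hy.2.le]) fun e he => ?_
      have hdot : v ⬝ᵥ (y + e) = v ⬝ᵥ y + v ⬝ᵥ e := dotProduct_add _ _ _
      exact_mod_cast hw_reflect _ (by
        linarith [neg_abs_le (v ⬝ᵥ e), abs_dotProduct_le_one hk he, hy.1])
    · refine inASMClass_apply_of_lap_le (hu y) id
        (lap_le_lap ?_ fun e _ => by exact_mod_cast hwu _)
      rw [not_and, not_lt] at hy
      by_cases hy' : c < v ⬝ᵥ y <;> simp [hw_def, hy', hy]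
  simpa [hw_def, hx] using hleast w hw x

noncomputable def spacing (d n : ℕ) : ℝ := (n : ℝ) ^ (-(1 : ℝ) / d)

def rescale (r : ℝ) (ξ : Site d) : Fin d → ℝ := fun i => r * (ξ i : ℝ)

def ScalingLimit (u : ℕ → Site d → ℕ) (u₀ : (Fin d → ℝ) → ℝ) : Prop :=
  ∀ K : Set (Fin d → ℝ), IsCompact K → K ⊆ {x | x ≠ 0} →
    ∀ ε : ℝ, 0 < ε → ∃ N : ℕ, ∀ n : ℕ, N ≤ n → ∀ ξ : Site d,
      rescale (spacing d n) ξ ∈ K →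
      |(n : ℝ) ^ (-(2 : ℝ) / d) * (u n ξ : ℝ) - u₀ (rescale (spacing d n) ξ)| ≤ ε

lemma spacing_nonneg (d n : ℕ) : 0 ≤ spacing d n := Real.rpow_nonneg (Nat.cast_nonneg n) _

lemma tendsto_spacing (hd : 0 < d) : Tendsto (spacing d) atTop (𝓝 0) := by
  unfold spacing
  simp_rw [neg_div]
  exact (tendsto_rpow_neg_atTop (by positivity)).comp tendsto_natCast_atTop_atTop

lemma eventually_spacing_pos : ∀ᶠ n in atTop, 0 < spacing d n :=
  eventually_atTop.2 ⟨1, fun _ hn => Real.rpow_pos_of_pos (by exact_mod_cast hn) _⟩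

lemma tendsto_mul_floor_div {α : Type*} {l : Filter α} {r : α → ℝ} (hr : Tendsto r l (𝓝 0))
    (hpos : ∀ᶠ a in l, 0 < r a) (y : ℝ) : Tendsto (fun a => r a * ⌊y / r a⌋) l (𝓝 y) := by
  refine tendsto_of_tendsto_of_tendsto_of_le_of_le' (by simpa using tendsto_const_nhds.sub hr)
    tendsto_const_nhds ?_ ?_
  all_goals filter_upwards [hpos] with a ha
  · have := mul_lt_mul_of_pos_left (Int.sub_one_lt_floor (y / r a)) ha
    rw [mul_sub, mul_div_cancel₀ _ ha.ne', mul_one] at this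
    exact this.le
  · calc r a * ⌊y / r a⌋ ≤ r a * (y / r a) := by gcongr; exact Int.floor_le _
      _ = y := mul_div_cancel₀ _ ha.ne'

lemma tendsto_rescale_floor (hd : 0 < d) (x : Fin d → ℝ) :
    Tendsto (fun n => rescale (spacing d n) fun i => ⌊x i / spacing d n⌋) atTop (𝓝 x) :=
  tendsto_pi_nhds.2 fun _ => tendsto_mul_floor_div (tendsto_spacing hd) eventually_spacing_pos _

lemma dotProduct_rescale (v : Site d) (r : ℝ) (ξ : Site d) :
    (Int.cast ∘ v : Fin d → ℝ) ⬝ᵥ rescale r ξ = r * (v ⬝ᵥ ξ : ℤ) := by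
  simp only [rescale, dotProduct, Function.comp_apply, Int.cast_sum, Int.cast_mul, Finset.mul_sum]
  exact Finset.sum_congr rfl fun _ _ => by ring

lemma rescale_reflect (v : Site d) (k c : ℤ) (r : ℝ) (ξ : Site d) :
    rescale r (reflect v k c ξ) = rescale r ξ -
      ((k : ℝ) * ((Int.cast ∘ v : Fin d → ℝ) ⬝ᵥ rescale r ξ - r * c)) • (Int.cast ∘ v) := by
  rw [dotProduct_rescale]
  funext i
  simp only [rescale, reflect, Pi.sub_apply, Pi.smul_apply, smul_eq_mul, Function.comp_apply]
  push_cast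
  ring

lemma exists_int_of_mem_dirNR {e : Fin d → ℝ} (he : e ∈ dirNR d) :
    ∃ v : Site d, ∃ k : ℤ, k * (v ⬝ᵥ v) = 2 ∧ e = Int.cast ∘ v := by
  obtain ⟨i, j, hij, rfl | rfl | rfl⟩ := he
  · exact ⟨Pi.single i 1, 2, by simp, by ext l; simp [Pi.single_apply]⟩
  · exact ⟨Pi.single i 1 + Pi.single j 1, 1, by simp [hij, hij.symm],
      by ext l; simp [Pi.single_apply]⟩
  · exact ⟨Pi.single i 1 - Pi.single j 1, 1, by simp [hij, hij.symm],
      by ext l; simp [Pi.single_apply]⟩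

lemma exists_reflection_of_sub_eq_smul {v x₁ x₂ : Fin d → ℝ} {k t : ℝ}
    (hk : k * (v ⬝ᵥ v) = 2) (ht : t < 0) (hsub : x₁ - x₂ = t • v)
    (hnorm : x₁ ⬝ᵥ x₁ ≤ x₂ ⬝ᵥ x₂) :
    ∃ c : ℝ, 0 ≤ c ∧ c < v ⬝ᵥ x₂ ∧ x₁ = x₂ - (k * (v ⬝ᵥ x₂ - c)) • v := by
  obtain rfl : x₁ = x₂ + t • v := by rw [← hsub, add_sub_cancel]
  have hvv : 0 < v ⬝ᵥ v :=
    (show 0 ≤ v ⬝ᵥ v from Finset.sum_nonneg fun i _ => mul_self_nonneg (v i)).lt_of_ne'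
      fun h => by simp [h] at hk
  simp only [add_dotProduct, dotProduct_add, dotProduct_smul, smul_dotProduct, smul_eq_mul,
    dotProduct_comm x₂ v] at hnorm
  -- `c = v ⬝ᵥ (x₁ + x₂) / 2`: the hyperplane passes through the midpoint of `x₁` and `x₂`
  refine ⟨v ⬝ᵥ x₂ + t * (v ⬝ᵥ v) / 2, by nlinarith, by nlinarith, ?_⟩
  rw [show k * (v ⬝ᵥ x₂ - (v ⬝ᵥ x₂ + t * (v ⬝ᵥ v) / 2)) = -t by
    linear_combination (-t / 2) * hk, neg_smul, sub_neg_eq_add]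

lemma renorm_le_renorm_iff {x y : Fin d → ℝ} : renorm x ≤ renorm y ↔ x ⬝ᵥ x ≤ y ⬝ᵥ y := by
  simp only [renorm, dotProduct, ← sq]
  exact Real.sqrt_le_sqrt_iff (Finset.sum_nonneg fun i _ => sq_nonneg (y i))

section ScalingLimit

variable {u : ℕ → Site d → ℕ} {u₀ : (Fin d → ℝ) → ℝ}

lemma tendsto_scaled_odometer (hcont : ContinuousOn u₀ {x | x ≠ 0}) (hlim : ScalingLimit u u₀)
    {x : Fin d → ℝ} (hx : x ≠ 0) {ξ : ℕ → Site d}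
    (hξ : Tendsto (fun n => rescale (spacing d n) (ξ n)) atTop (𝓝 x)) :
    Tendsto (fun n : ℕ => (n : ℝ) ^ (-(2 : ℝ) / d) * (u n (ξ n) : ℝ)) atTop (𝓝 (u₀ x)) := by
  set K := Metric.closedBall x (‖x‖ / 2)
  have hK0 : K ⊆ {y | y ≠ 0} := fun y hy h0 => by
    simp only [K, h0, Metric.mem_closedBall, dist_zero_left] at hy
    linarith [norm_pos_iff.2 hx]
  have hmem : ∀ᶠ n in atTop, rescale (spacing d n) (ξ n) ∈ K :=
    hξ (Metric.closedBall_mem_nhds x (by positivity))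
  have hu₀ : Tendsto (fun n => u₀ (rescale (spacing d n) (ξ n))) atTop (𝓝 (u₀ x)) :=
    (hcont.continuousAt (isOpen_ne.mem_nhds hx)).tendsto.comp hξ
  have herr : Tendsto (fun n : ℕ => (n : ℝ) ^ (-(2 : ℝ) / d) * (u n (ξ n) : ℝ) -
      u₀ (rescale (spacing d n) (ξ n))) atTop (𝓝 0) := by
    refine Metric.tendsto_atTop.2 fun ε hε => ?_
    obtain ⟨N, hN⟩ := hlim K (isCompact_closedBall _ _) hK0 (ε / 2) (half_pos hε)
    obtain ⟨M, hM⟩ := eventually_atTop.1 hmem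
    refine ⟨max N M, fun n hn => ?_⟩
    rw [Real.dist_0_eq_abs]
    exact (hN n (le_of_max_le_left hn) _ (hM n (le_of_max_le_right hn))).trans_lt (half_lt_self hε)
  simpa using herr.add hu₀

theorem le_of_reflection (hd : 0 < d)
    (hu : ∀ n, InASMClass d n (u n))
    (hleast : ∀ n, ∀ w : Site d → ℕ, InASMClass d n w → ∀ x, u n x ≤ w x)
    (hcont : ContinuousOn u₀ {x | x ≠ 0}) (hlim : ScalingLimit u u₀)
    {v : Site d} {k : ℤ} (hk : k * (v ⬝ᵥ v) = 2) {c : ℝ} (hc : 0 ≤ c)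
    {x₁ x₂ : Fin d → ℝ} (hx₁ : x₁ ≠ 0) (hx₂ : x₂ ≠ 0) (hcx₂ : c < (Int.cast ∘ v) ⬝ᵥ x₂)
    (hx : x₁ = x₂ - ((k : ℝ) * ((Int.cast ∘ v) ⬝ᵥ x₂ - c)) • (Int.cast ∘ v)) :
    u₀ x₂ ≤ u₀ x₁ := by
  set ξ : ℕ → Site d := fun n i => ⌊x₂ i / spacing d n⌋
  set cn : ℕ → ℤ := fun n => ⌊c / spacing d n⌋
  have hξ : Tendsto (fun n => rescale (spacing d n) (ξ n)) atTop (𝓝 x₂) :=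
    tendsto_rescale_floor hd x₂
  have hcn : Tendsto (fun n => spacing d n * cn n) atTop (𝓝 c) :=
    tendsto_mul_floor_div (tendsto_spacing hd) eventually_spacing_pos c
  have hdot : Tendsto (fun n => (Int.cast ∘ v : Fin d → ℝ) ⬝ᵥ rescale (spacing d n) (ξ n))
      atTop (𝓝 ((Int.cast ∘ v) ⬝ᵥ x₂)) :=
    ((continuous_const.dotProduct continuous_id).tendsto _).comp hξ
  have hξ' : Tendsto (fun n => rescale (spacing d n) (reflect v k (cn n) (ξ n))) atTop (𝓝 x₁) := by
    simp only [rescale_reflect, hx]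
    exact hξ.sub ((tendsto_const_nhds.mul (hdot.sub hcn)).smul_const _)
  have hside : ∀ᶠ n in atTop, cn n < v ⬝ᵥ ξ n := by
    filter_upwards [(hdot.sub hcn).eventually_const_lt (sub_pos.2 hcx₂)] with n hn
    rw [dotProduct_rescale, ← mul_sub] at hn
    exact_mod_cast sub_pos.1 (pos_of_mul_pos_right hn (spacing_nonneg d n))
  refine le_of_tendsto_of_tendsto (tendsto_scaled_odometer hcont hlim hx₂ hξ)
    (tendsto_scaled_odometer hcont hlim hx₁ hξ') ?_
  filter_upwards [hside] with n hn
  have hcn0 : 0 ≤ cn n := Int.floor_nonneg.2 (div_nonneg hc (spacing_nonneg d n))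
  gcongr
  exact odometer_le_reflect (hu n) (hleast n) hk hcn0 hn

theorem le_of_sub_eq_smul (hd : 0 < d)
    (hu : ∀ n, InASMClass d n (u n))
    (hleast : ∀ n, ∀ w : Site d → ℕ, InASMClass d n w → ∀ x, u n x ≤ w x)
    (hcont : ContinuousOn u₀ {x | x ≠ 0}) (hlim : ScalingLimit u u₀)
    {v : Site d} {k : ℤ} (hk : k * (v ⬝ᵥ v) = 2) {t : ℝ} (ht : t < 0)
    {x₁ x₂ : Fin d → ℝ} (hx₁ : x₁ ≠ 0) (hx₂ : x₂ ≠ 0) (hsub : x₁ - x₂ = t • (Int.cast ∘ v))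
    (hnorm : x₁ ⬝ᵥ x₁ ≤ x₂ ⬝ᵥ x₂) : u₀ x₂ ≤ u₀ x₁ := by
  have hkℝ : (k : ℝ) * ((Int.cast ∘ v : Fin d → ℝ) ⬝ᵥ (Int.cast ∘ v)) = 2 := by
    have := congrArg (Int.cast : ℤ → ℝ) hk
    push_cast [dotProduct] at this ⊢
    exact this
  obtain ⟨c, hc, hcx₂, hx⟩ := exists_reflection_of_sub_eq_smul hkℝ ht hsub hnorm
  exact le_of_reflection hd hu hleast hcont hlim hk hc hx₁ hx₂ hcx₂ hx

end ScalingLimit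

theorem stmt10_general {d : ℕ}
    (u : ℕ → Site d → ℕ)
    (hu : ∀ n, InASMClass d n (u n))
    (hleast : ∀ n, ∀ w : Site d → ℕ, InASMClass d n w → ∀ x, u n x ≤ w x)
    (u₀ : (Fin d → ℝ) → ℝ)
    (hcont : ContinuousOn u₀ {x | x ≠ 0})
    (hconv : ∀ K : Set (Fin d → ℝ), IsCompact K → K ⊆ {x | x ≠ 0} →
      ∀ ε : ℝ, 0 < ε → ∃ N : ℕ, ∀ n : ℕ, N ≤ n → ∀ ξ : Site d,
        (fun i => (n : ℝ) ^ (-(1 : ℝ) / d) * (ξ i : ℝ)) ∈ K →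
        |(n : ℝ) ^ (-(2 : ℝ) / d) * (u n ξ : ℝ) -
            u₀ (fun i => (n : ℝ) ^ (-(1 : ℝ) / d) * (ξ i : ℝ))| ≤ ε) :
    ∀ e ∈ dirNR d, ∀ x1 x2 : Fin d → ℝ, x1 ≠ 0 → x2 ≠ 0 →
      (∃ t : ℝ, t ≠ 0 ∧ x1 - x2 = t • e) →
      renorm x1 ≤ renorm x2 → u₀ x2 ≤ u₀ x1 := by
  rintro e he x1 x2 hx1 hx2 ⟨t, ht, hsub⟩ hnorm
  have hd : 0 < d := by
    obtain ⟨i, -⟩ := he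
    exact i.pos
  obtain ⟨v, k, hk, rfl⟩ := exists_int_of_mem_dirNR he
  rw [renorm_le_renorm_iff] at hnorm
  rcases ht.lt_or_gt with ht | ht
  · exact le_of_sub_eq_smul hd hu hleast hcont hconv hk ht hx1 hx2 hsub hnorm
  · refine le_of_sub_eq_smul hd hu hleast hcont hconv (v := -v) (by simpa using hk)
      (neg_lt_zero.2 ht) hx1 hx2 ?_ hnorm
    rw [hsub]
    ext
    simp

/-- Monotonicity of the Abelian sandpile scaling limit. Let `d ≥ 2`
and for each `n` let `u_n` be the Abelian sandpile odometer for `n` chips at the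
origin (the least element of `W_n`). Suppose `u₀ : ℝ^d ∖ {0} → [0,∞)` is continuous and
the rescaled odometers `ξ ↦ n^{-2/d}·u_n(ξ)` converge to `u₀` locally uniformly in
`ℝ^d ∖ {0}`. Then for every `e ∈ 𝒩` and all `x¹, x² ∈ ℝ^d ∖ {0}` such that `x¹ - x²`
is a nonzero real multiple of `e`, `|x¹| ≤ |x²|` implies `u₀(x¹) ≥ u₀(x²)`. -/
theorem stmt10 {d : ℕ} (hd : 2 ≤ d)
    (u : ℕ → Site d → ℕ)
    (hu : ∀ n, InASMClass d n (u n))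
    (hleast : ∀ n, ∀ w : Site d → ℕ, InASMClass d n w → ∀ x, u n x ≤ w x)
    (u₀ : (Fin d → ℝ) → ℝ)
    (hcont : ContinuousOn u₀ {x | x ≠ 0})
    (hnonneg : ∀ x : Fin d → ℝ, x ≠ 0 → 0 ≤ u₀ x)
    (hconv : ∀ K : Set (Fin d → ℝ), IsCompact K → K ⊆ {x | x ≠ 0} →
      ∀ ε : ℝ, 0 < ε → ∃ N : ℕ, ∀ n : ℕ, N ≤ n → ∀ ξ : Site d,
        (fun i => (n : ℝ) ^ (-(1 : ℝ) / d) * (ξ i : ℝ)) ∈ K →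
        |(n : ℝ) ^ (-(2 : ℝ) / d) * (u n ξ : ℝ) -
            u₀ (fun i => (n : ℝ) ^ (-(1 : ℝ) / d) * (ξ i : ℝ))| ≤ ε) :
    ∀ e ∈ dirNR d, ∀ x1 x2 : Fin d → ℝ, x1 ≠ 0 → x2 ≠ 0 →
      (∃ t : ℝ, t ≠ 0 ∧ x1 - x2 = t • e) →
      renorm x1 ≤ renorm x2 → u₀ x2 ≤ u₀ x1 :=
  stmt10_general u hu hleast u₀ hcont hconv

end Sandpile
end

section
/- (Lipschitz regularity of the free boundary) Let d ≥ 2 and let u₀ : ℝ^d → [0,∞) be continuous on ℝ^d ∖ {0}, with bounded support, and satisfy: (i) there is c₀ > 0 such that {x ∈ ℝ^d : 0 < |x| ≤ c₀} ⊆ {u₀ > 0}; (ii) for every e ∈ 𝒩 and all x¹, x² ∈ ℝ^d ∖ {0} such that x¹ − x² is a nonzero real multiple of e, |x¹| ≤ |x²| implies u₀(x¹) ≥ u₀(x²). Let V₀ be the support of u₀ (the closure of {u₀ > 0}). Then ∂V₀ is locally a Lipschitz graph: for every x⁰ ∈ ∂V₀ there exist r > 0, L > 0, a unit vector ν ∈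 ℝ^d, and an L-Lipschitz function g : ν^⊥ → ℝ (ν^⊥ the orthogonal complement of ν) such that V₀ ∩ B(x⁰, r) = {y + t·ν : y ∈ ν^⊥, t ≤ g(y)} ∩ B(x⁰, r). -/
/-!
The support `V₀` inherits the monotonicity of `u₀`: if `x ∈ V₀`, `e ∈ 𝒩` and `|x + t e| ≤ |x|`,
then `x + t e ∈ V₀` (strict convexity of the norm handles `|x + t e| = |x|`). By (i) the origin
is an interior point of `V₀`, so a boundary point `x⁰` is nonzero. Choose `i` with `x⁰ᵢ ≠ 0` and
the signed directions `vᵢ = ±eᵢ`, `vⱼ = ±eᵢ ± eⱼ`, with signs so that `⟨x⁰, vⱼ⟩ ≥ |x⁰ᵢ|`. Near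
`x⁰`, moving a little against any `vⱼ` decreases the norm, so `V₀ ∩ B(x⁰, ρ)` is stable under
`x ↦ x - w` for small `w` in the cone `K` spanned by the `vⱼ`. The `vⱼ` span `ℝ^d`, so `K`
contains a ball `B(ν, ε)` around a unit vector `ν`, and a closed set that is locally stable
under subtracting `K` is locally the subgraph, in direction `ν`, of the upper envelope of the
cones `x - K`; that envelope is `1/ε`-Lipschitz.
-/

open scoped RealInnerProductSpace
open Metric Set Filter Topology

namespace LipschitzFB

/-- The set of directions `𝒩 = {eᵢ, eᵢ + eⱼ, eᵢ - eⱼ : 1 ≤ i ≠ j ≤ d}` in `ℝ^d`. -/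
def dirNE (d : ℕ) : Set (EuclideanSpace ℝ (Fin d)) :=
  {v | ∃ i j : Fin d, i ≠ j ∧
    (v = EuclideanSpace.single i 1 ∨
     v = EuclideanSpace.single i 1 + EuclideanSpace.single j 1 ∨
     v = EuclideanSpace.single i 1 - EuclideanSpace.single j 1)}

section ConeGraph

variable {E : Type*} [NormedAddCommGroup E] [InnerProductSpace ℝ E]
  {K : PointedCone ℝ E} {ν p : E} {ε : ℝ}

noncomputable def coneFloor (K : PointedCone ℝ E) (ν q : E) : ℝ :=
  sInf {a : ℝ | a • ν + q ∈ K}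

lemma inv_mul_norm_smul_add_mem (hε : 0 < ε) (hK : closedBall ν ε ⊆ K) (q : E) :
    (ε⁻¹ * ‖q‖) • ν + q ∈ K := by
  rcases eq_or_ne q 0 with rfl | hq
  · simp
  have hq' : 0 < ‖q‖ := norm_pos_iff.2 hq
  have hmem : ν + (ε / ‖q‖) • q ∈ K := hK <| by
    rw [mem_closedBall, dist_eq_norm, add_sub_cancel_left, norm_smul, Real.norm_of_nonneg
      (by positivity), div_mul_cancel₀ _ hq'.ne']
  convert K.smul_mem (by positivity : 0 ≤ ε⁻¹ * ‖q‖) hmem using 1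
  rw [smul_add, smul_smul]
  field_simp
  simp

lemma neg_mul_norm_le_of_smul_add_mem (hp : ∀ w ∈ K, 0 ≤ ⟪p, w⟫) (hpν : 0 < ⟪p, ν⟫)
    {a : ℝ} {q : E} (h : a • ν + q ∈ K) : -(‖p‖ / ⟪p, ν⟫ * ‖q‖) ≤ a := by
  have hpw := hp _ h
  rw [inner_add_right, real_inner_smul_right] at hpw
  rw [neg_le, div_mul_eq_mul_div, le_div_iff₀ hpν]
  linarith [real_inner_le_norm p q]

lemma coneFloor_le (hp : ∀ w ∈ K, 0 ≤ ⟪p, w⟫) (hpν : 0 < ⟪p, ν⟫) {a : ℝ} {q : E}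
    (h : a • ν + q ∈ K) : coneFloor K ν q ≤ a :=
  csInf_le ⟨_, fun _ hb => neg_mul_norm_le_of_smul_add_mem hp hpν hb⟩ h

lemma neg_mul_norm_le_coneFloor (hε : 0 < ε) (hK : closedBall ν ε ⊆ K)
    (hp : ∀ w ∈ K, 0 ≤ ⟪p, w⟫) (hpν : 0 < ⟪p, ν⟫) (q : E) :
    -(‖p‖ / ⟪p, ν⟫ * ‖q‖) ≤ coneFloor K ν q :=
  le_csInf ⟨_, inv_mul_norm_smul_add_mem hε hK q⟩ fun _ ha =>
    neg_mul_norm_le_of_smul_add_mem hp hpν ha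

lemma coneFloor_add_le (hε : 0 < ε) (hK : closedBall ν ε ⊆ K)
    (hp : ∀ w ∈ K, 0 ≤ ⟪p, w⟫) (hpν : 0 < ⟪p, ν⟫) (q q' : E) :
    coneFloor K ν (q + q') ≤ coneFloor K ν q + ε⁻¹ * ‖q'‖ := by
  suffices coneFloor K ν (q + q') - ε⁻¹ * ‖q'‖ ≤ coneFloor K ν q by linarith
  refine le_csInf ⟨_, inv_mul_norm_smul_add_mem hε hK q⟩ fun a ha => ?_
  have hsum : (a + ε⁻¹ * ‖q'‖) • ν + (q + q') ∈ K := by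
    convert K.add_mem ha (inv_mul_norm_smul_add_mem hε hK q') using 1
    rw [add_smul]; abel
  linarith [coneFloor_le hp hpν hsum]

lemma smul_add_mem_of_coneFloor_lt (hε : 0 < ε) (hK : closedBall ν ε ⊆ K) {q : E} {b : ℝ}
    (h : coneFloor K ν q < b) : b • ν + q ∈ K := by
  obtain ⟨a, ha, hab⟩ :=
    exists_lt_of_csInf_lt (s := {a : ℝ | a • ν + q ∈ K}) ⟨_, inv_mul_norm_smul_add_mem hε hK q⟩ h
  have hν : ν ∈ K := hK (mem_closedBall_self hε.le)
  convert K.add_mem ha (K.smul_mem (sub_nonneg.2 hab.le) hν) using 1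
  rw [sub_smul]; abel

/-- The height above `y + ℝ ν` of the upper envelope of the cones `x - K`, `x ∈ D`. -/
noncomputable def coneEnvelope (K : PointedCone ℝ E) (ν : E) (D : Set E) (y : E) : ℝ :=
  sSup ((fun x => -coneFloor K ν (x - y)) '' D)

variable {D : Set E}

lemma bddAbove_neg_coneFloor_image (hε : 0 < ε) (hK : closedBall ν ε ⊆ K)
    (hp : ∀ w ∈ K, 0 ≤ ⟪p, w⟫) (hpν : 0 < ⟪p, ν⟫) (hD : Bornology.IsBounded D) (y : E) :
    BddAbove ((fun x => -coneFloor K ν (x - y)) '' D) := by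
  obtain ⟨R, hR⟩ := hD.exists_norm_le
  refine ⟨‖p‖ / ⟪p, ν⟫ * (R + ‖y‖), ?_⟩
  rintro _ ⟨x, hx, rfl⟩
  have hC : 0 ≤ ‖p‖ / ⟪p, ν⟫ := by positivity
  have hxy : ‖x - y‖ ≤ R + ‖y‖ := (norm_sub_le x y).trans (by linarith [hR x hx])
  linarith [neg_mul_norm_le_coneFloor hε hK hp hpν (x - y), mul_le_mul_of_nonneg_left hxy hC]

lemma le_coneEnvelope (hε : 0 < ε) (hK : closedBall ν ε ⊆ K)
    (hp : ∀ w ∈ K, 0 ≤ ⟪p, w⟫) (hpν : 0 < ⟪p, ν⟫) (hD : Bornology.IsBounded D)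
    {x y : E} {t : ℝ} (hx : x ∈ D) (h : x - (y + t • ν) ∈ K) : t ≤ coneEnvelope K ν D y := by
  have hfloor : coneFloor K ν (x - y) ≤ -t :=
    coneFloor_le hp hpν (by convert h using 1; rw [neg_smul]; abel)
  exact (le_neg.2 hfloor).trans
    (le_csSup (bddAbove_neg_coneFloor_image hε hK hp hpν hD y) ⟨x, hx, rfl⟩)

lemma exists_sub_mem_of_lt_coneEnvelope (hε : 0 < ε) (hK : closedBall ν ε ⊆ K)
    (hD : D.Nonempty) {y : E} {t : ℝ} (h : t < coneEnvelope K ν D y) :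
    ∃ x ∈ D, x - (y + t • ν) ∈ K := by
  obtain ⟨_, ⟨x, hx, rfl⟩, htx⟩ := exists_lt_of_lt_csSup (hD.image _) h
  refine ⟨x, hx, ?_⟩
  convert smul_add_mem_of_coneFloor_lt hε hK (lt_neg.1 htx) using 1
  rw [neg_smul]; abel

lemma coneEnvelope_le_add (hε : 0 < ε) (hK : closedBall ν ε ⊆ K)
    (hp : ∀ w ∈ K, 0 ≤ ⟪p, w⟫) (hpν : 0 < ⟪p, ν⟫) (hD : Bornology.IsBounded D)
    (hDne : D.Nonempty) (y₁ y₂ : E) :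
    coneEnvelope K ν D y₁ ≤ coneEnvelope K ν D y₂ + ε⁻¹ * ‖y₁ - y₂‖ := by
  refine csSup_le (hDne.image _) ?_
  rintro _ ⟨x, hx, rfl⟩
  have h := coneFloor_add_le hε hK hp hpν (x - y₁) (y₁ - y₂)
  rw [sub_add_sub_cancel] at h
  have hx₂ : -coneFloor K ν (x - y₂) ≤ coneEnvelope K ν D y₂ :=
    le_csSup (bddAbove_neg_coneFloor_image hε hK hp hpν hD y₂) ⟨x, hx, rfl⟩
  change -coneFloor K ν (x - y₁) ≤ _
  linarith

lemma sub_inner_smul_mem_orthogonal (hν : ‖ν‖ = 1) (z : E) : z - ⟪ν, z⟫ • ν ∈ (ℝ ∙ ν)ᗮ := by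
  rw [Submodule.mem_orthogonal_singleton_iff_inner_right, inner_sub_right, real_inner_smul_right,
    real_inner_self_eq_norm_sq, hν]
  ring

theorem exists_lipschitz_subgraph_of_cone {V : Set E} (hV : IsClosed V) {x₀ : E} (hx₀ : x₀ ∈ V)
    (hν : ‖ν‖ = 1) (hε : 0 < ε) (hK : closedBall ν ε ⊆ K)
    (hp : ∀ w ∈ K, 0 ≤ ⟪p, w⟫) (hpν : 0 < ⟪p, ν⟫) {ρ : ℝ} (hρ : 0 < ρ)
    (hdown : ∀ x ∈ V, dist x x₀ ≤ ρ → ∀ w ∈ K, ‖w‖ ≤ 2 * ρ → x - w ∈ V) :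
    ∃ g : (ℝ ∙ ν)ᗮ → ℝ, (∀ y₁ y₂ : (ℝ ∙ ν)ᗮ, |g y₁ - g y₂| ≤ ε⁻¹ * ‖(y₁ : E) - y₂‖) ∧
      V ∩ ball x₀ (ρ / 2) =
        {z | ∃ (y : (ℝ ∙ ν)ᗮ) (t : ℝ), t ≤ g y ∧ z = (y : E) + t • ν} ∩ ball x₀ (ρ / 2) := by
  set D := V ∩ closedBall x₀ ρ
  have hD : Bornology.IsBounded D := isBounded_closedBall.subset inter_subset_right
  have hDne : D.Nonempty := ⟨x₀, hx₀, mem_closedBall_self hρ.le⟩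
  refine ⟨fun y => coneEnvelope K ν D y, fun y₁ y₂ => abs_sub_le_iff.2 ⟨?_, ?_⟩, ?_⟩
  · dsimp only
    linarith [coneEnvelope_le_add hε hK hp hpν hD hDne y₁ y₂]
  · have h := coneEnvelope_le_add hε hK hp hpν hD hDne y₂ y₁
    rw [norm_sub_rev] at h
    dsimp only
    linarith
  ext z
  refine ⟨fun ⟨hzV, hz⟩ => ⟨?_, hz⟩, fun ⟨⟨y, t, ht, hzyt⟩, hz⟩ => ⟨?_, hz⟩⟩
  · have hzD : z ∈ D := ⟨hzV, mem_closedBall.2 ((mem_ball.1 hz).le.trans (by linarith))⟩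
    refine ⟨⟨_, sub_inner_smul_mem_orthogonal hν z⟩, ⟪ν, z⟫,
      le_coneEnvelope hε hK hp hpν hD hzD ?_, by simp⟩
    simp
  · have hbelow : ∀ δ ∈ Ioc 0 (ρ / 2), z - δ • ν ∈ V := by
      rintro δ ⟨hδ, hδρ⟩
      obtain ⟨x, ⟨hxV, hx⟩, hxK⟩ :=
        exists_sub_mem_of_lt_coneEnvelope hε hK hDne (show t - δ < _ by linarith)
      have hsplit : x - (y + (t - δ) • ν) = (x - x₀) + (x₀ - z) + δ • ν := by
        rw [hzyt, sub_smul]; abel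
      convert hdown x hxV hx _ hxK ?_ using 1
      · rw [hsplit]; abel
      rw [hsplit]
      have hxz : ‖x₀ - z‖ < ρ / 2 := by rw [← dist_eq_norm, dist_comm]; exact hz
      calc ‖(x - x₀) + (x₀ - z) + δ • ν‖ ≤ ‖x - x₀‖ + ‖x₀ - z‖ + ‖δ • ν‖ := norm_add₃_le
        _ ≤ ρ + ρ / 2 + ρ / 2 := by
          rw [norm_smul, hν, mul_one, Real.norm_of_nonneg hδ.le, ← dist_eq_norm]
          gcongr
          exact mem_closedBall.1 hx
        _ = 2 * ρ := by ring
    have hlim : Tendsto (fun δ : ℝ => z - δ • ν) (𝓝[>] 0) (𝓝 z) :=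
      ((by fun_prop : Continuous fun δ : ℝ => z - δ • ν).tendsto' 0 z (by simp)).mono_left
        nhdsWithin_le_nhds
    exact hV.mem_of_tendsto hlim (eventually_of_mem (Ioc_mem_nhdsGT (by linarith)) hbelow)

end ConeGraph

section NormMonotone

variable {E : Type*} [NormedAddCommGroup E] [InnerProductSpace ℝ E]

lemma ball_zero_subset_closure [Nontrivial E] {S : Set E} {c : ℝ}
    (h : {x : E | 0 < ‖x‖ ∧ ‖x‖ ≤ c} ⊆ S) : ball 0 c ⊆ closure S := by
  refine ((dense_compl_singleton (0 : E)).open_subset_closure_inter isOpen_ball).trans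
    (closure_mono ?_)
  rintro x ⟨hx, hx0⟩
  exact h ⟨norm_pos_iff.2 hx0, (mem_ball_zero_iff.1 hx).le⟩

def NormAntitoneAlong (u : E → ℝ) (e : E) : Prop :=
  ∀ x₁ x₂ : E, x₁ ≠ 0 → x₂ ≠ 0 → (∃ t : ℝ, t ≠ 0 ∧ x₁ - x₂ = t • e) → ‖x₁‖ ≤ ‖x₂‖ →
    u x₂ ≤ u x₁

variable {u : E → ℝ} {e x w : E}

lemma add_mem_closure_of_norm_lt (hu : NormAntitoneAlong u e)
    (h0 : (0 : E) ∈ closure {x | 0 < u x}) (hx : x ∈ closure {x | 0 < u x}) (hw : w ∈ ℝ ∙ e)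
    (hlt : ‖x + w‖ < ‖x‖) : x + w ∈ closure {x | 0 < u x} := by
  have hU : IsOpen {y : E | ‖y + w‖ < ‖y‖} := isOpen_lt (by fun_prop) continuous_norm
  have hmaps : MapsTo (· + w) ({y | ‖y + w‖ < ‖y‖} ∩ {x | 0 < u x}) (closure {x | 0 < u x}) := by
    rintro y ⟨hy, hyu⟩
    rcases eq_or_ne (y + w) 0 with hyw | hyw
    · simpa [hyw] using h0
    obtain ⟨t, rfl⟩ := Submodule.mem_span_singleton.1 hw
    have hy0 : y ≠ 0 := by rintro rfl; simp at hy; linarith [norm_nonneg (t • e)]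
    have ht : t ≠ 0 := by rintro rfl; simp at hy
    exact subset_closure (hyu.trans_le (hu _ _ hyw hy0 ⟨t, ht, by abel⟩ hy.le))
  simpa using map_mem_closure (continuous_add_const w) (hU.inter_closure ⟨hlt, hx⟩) hmaps

lemma add_mem_closure_of_norm_le (hu : NormAntitoneAlong u e)
    (h0 : (0 : E) ∈ closure {x | 0 < u x}) (hx : x ∈ closure {x | 0 < u x}) (hw : w ∈ ℝ ∙ e)
    (hle : ‖x + w‖ ≤ ‖x‖) : x + w ∈ closure {x | 0 < u x} := by
  rcases eq_or_ne w 0 with rfl | hw0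
  · simpa using hx
  have hseg : openSegment ℝ x (x + w) ⊆ closure {x | 0 < u x} := by
    intro y hy
    have hy_lt : ‖y‖ < ‖x‖ := mem_ball_zero_iff.1 <| openSegment_subset_ball_of_ne
      (mem_closedBall_zero_iff.2 le_rfl) (mem_closedBall_zero_iff.2 hle)
      (by simpa using hw0) hy
    rw [openSegment_eq_image'] at hy
    obtain ⟨θ, -, rfl⟩ := hy
    rw [add_sub_cancel_left] at hy_lt ⊢
    exact add_mem_closure_of_norm_lt hu h0 hx (Submodule.smul_mem _ θ hw) hy_lt
  have hxw : x + w ∈ closure (openSegment ℝ x (x + w)) := by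
    rw [closure_openSegment]; exact right_mem_segment ℝ x (x + w)
  simpa using closure_mono hseg hxw

end NormMonotone

section NonnegCone

variable {E : Type*} [NormedAddCommGroup E] [InnerProductSpace ℝ E]

lemma smul_closedBall_subset_pointedCone {K : PointedCone ℝ E} {ν : E} {ε c : ℝ} (hε : 0 ≤ ε)
    (hc : 0 ≤ c) (h : closedBall ν ε ⊆ K) : closedBall (c • ν) (c * ε) ⊆ K := by
  have hball := smul_closedBall c ν hε
  rw [Real.norm_of_nonneg hc] at hball
  rw [← hball]
  rintro _ ⟨y, hy, rfl⟩
  exact K.smul_mem hc (h hy)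

variable {ι : Type*} [Fintype ι]

noncomputable def nonnegCone (v : ι → E) : PointedCone ℝ E :=
  (PointedCone.positive ℝ (ι → ℝ)).map (Fintype.linearCombination ℝ v)

lemma mem_nonnegCone {v : ι → E} {w : E} :
    w ∈ nonnegCone v ↔ ∃ c : ι → ℝ, (∀ j, 0 ≤ c j) ∧ ∑ j, c j • v j = w := by
  simp [nonnegCone, PointedCone.mem_map, PointedCone.mem_positive, Pi.le_def,
    Fintype.linearCombination_apply]

lemma mul_sum_le_inner_sum_smul {v : ι → E} {p : E} {m : ℝ} (hm : ∀ j, m ≤ ⟪p, v j⟫)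
    {c : ι → ℝ} (hc : ∀ j, 0 ≤ c j) : m * ∑ j, c j ≤ ⟪p, ∑ j, c j • v j⟫ := by
  rw [Finset.mul_sum, inner_sum]
  refine Finset.sum_le_sum fun j _ => ?_
  rw [real_inner_smul_right, mul_comm]
  exact mul_le_mul_of_nonneg_left (hm j) (hc j)

lemma inner_nonneg_of_mem_nonnegCone {v : ι → E} {p w : E} (hp : ∀ j, 0 ≤ ⟪p, v j⟫)
    (hw : w ∈ nonnegCone v) : 0 ≤ ⟪p, w⟫ := by
  obtain ⟨c, hc, rfl⟩ := mem_nonnegCone.1 hw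
  simpa using mul_sum_le_inner_sum_smul hp hc

lemma exists_closedBall_subset_nonnegCone [FiniteDimensional ℝ E] {v : ι → E}
    (hv : Submodule.span ℝ (range v) = ⊤) : ∃ ε > 0, closedBall (∑ j, v j) ε ⊆ nonnegCone v := by
  set T := Fintype.linearCombination ℝ v
  have hT : IsOpenMap T := T.isOpenMap_of_finiteDimensional
    ((span_range_eq_top_iff_surjective_fintypeLinearCombination ℝ v).1 hv)
  have hpos : IsOpen {c : ι → ℝ | ∀ j, 0 < c j} := by
    simp only [ofPred_forall]
    exact isOpen_iInter_of_finite fun j => isOpen_lt continuous_const (continuous_apply j)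
  have hmem : ∑ j, v j ∈ T '' {c | ∀ j, 0 < c j} :=
    ⟨1, fun _ => one_pos, by simp [T, Fintype.linearCombination_apply]⟩
  obtain ⟨ε, hε, hball⟩ := Metric.isOpen_iff.1 (hT _ hpos) _ hmem
  refine ⟨ε / 2, by positivity, (closedBall_subset_ball (by linarith)).trans (hball.trans ?_)⟩
  rintro _ ⟨c, hc, rfl⟩
  exact mem_nonnegCone.2 ⟨c, fun j => (hc j).le, rfl⟩

end NonnegCone

section Descent

variable {E : Type*} [NormedAddCommGroup E] [InnerProductSpace ℝ E]

lemma norm_sub_smul_le_norm {x v : E} {c : ℝ} (hc : 0 ≤ c) (h : c * ‖v‖ ^ 2 ≤ 2 * ⟪x, v⟫) :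
    ‖x - c • v‖ ≤ ‖x‖ := by
  refine le_of_pow_le_pow_left₀ two_ne_zero (norm_nonneg x) ?_
  rw [norm_sub_sq_real, real_inner_smul_right, norm_smul, mul_pow, Real.norm_eq_abs, sq_abs]
  nlinarith

lemma sub_smul_mem_of_dist_le {V : Set E} {x₀ v : E} {m : ℝ}
    (hV : ∀ x ∈ V, ∀ a : ℝ, ‖x + a • v‖ ≤ ‖x‖ → x + a • v ∈ V) (hv : ‖v‖ ≤ 2)
    (hm : m ≤ ⟪x₀, v⟫) {x : E} (hx : x ∈ V) {c : ℝ} (hc : 0 ≤ c)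
    (h : dist x x₀ + 2 * c ≤ m / 4) : x - c • v ∈ V := by
  have hxv : m - 2 * dist x x₀ ≤ ⟪x, v⟫ := by
    have hcs : |⟪x - x₀, v⟫| ≤ ‖x - x₀‖ * ‖v‖ := abs_real_inner_le_norm _ _
    have hnear : ‖x - x₀‖ * ‖v‖ ≤ dist x x₀ * 2 := by
      rw [dist_eq_norm]; exact mul_le_mul_of_nonneg_left hv (norm_nonneg _)
    rw [inner_sub_left] at hcs
    linarith [neg_abs_le (⟪x, v⟫ - ⟪x₀, v⟫)]
  have hv2 : c * ‖v‖ ^ 2 ≤ c * 4 :=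
    mul_le_mul_of_nonneg_left (by nlinarith [norm_nonneg v]) hc
  have hdec := norm_sub_smul_le_norm hc (hv2.trans (by linarith [dist_nonneg (x := x) (y := x₀)]))
  rw [sub_eq_add_neg, ← neg_smul] at hdec ⊢
  exact hV x hx _ hdec

lemma sub_sum_smul_mem {ι : Type*} {V : Set E} {x₀ : E} {v : ι → E} {B R : ℝ}
    (hv : ∀ j, ‖v j‖ ≤ B)
    (hstep : ∀ j, ∀ x ∈ V, ∀ c, 0 ≤ c → dist x x₀ + B * c ≤ R → x - c • v j ∈ V)
    {c : ι → ℝ} (hc : ∀ j, 0 ≤ c j) (s : Finset ι) :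
    ∀ x ∈ V, dist x x₀ + B * ∑ j ∈ s, c j ≤ R → x - ∑ j ∈ s, c j • v j ∈ V := by
  classical
  induction s using Finset.induction_on with
  | empty => intro x hx _; simpa using hx
  | insert a s ha ih =>
    intro x hx h
    rw [Finset.sum_insert ha] at h ⊢
    have hB : 0 ≤ B := (norm_nonneg _).trans (hv a)
    have hs : 0 ≤ B * ∑ j ∈ s, c j := mul_nonneg hB (Finset.sum_nonneg fun j _ => hc j)
    rw [← sub_sub]
    refine ih _ (hstep a x hx (c a) (hc a) (by linarith)) ?_
    have hmove : dist (x - c a • v a) x₀ ≤ dist x x₀ + B * c a := by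
      calc dist (x - c a • v a) x₀ ≤ dist x x₀ + ‖c a • v a‖ := by
            rw [dist_eq_norm, dist_eq_norm, sub_right_comm]; exact norm_sub_le _ _
        _ ≤ dist x x₀ + B * c a := by
            rw [norm_smul, Real.norm_of_nonneg (hc a), mul_comm]
            gcongr
            exacts [hc a, hv a]
    linarith

lemma exists_forall_sub_mem_of_mem_nonnegCone {ι : Type*} [Fintype ι] {V : Set E} {x₀ : E}
    {v : ι → E} {m : ℝ} (hm : 0 < m)
    (hvx : ∀ j, m ≤ ⟪x₀, v j⟫) (hv : ∀ j, ‖v j‖ ≤ 2)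
    (hV : ∀ j, ∀ x ∈ V, ∀ a : ℝ, ‖x + a • v j‖ ≤ ‖x‖ → x + a • v j ∈ V) :
    ∃ ρ > 0, ∀ x ∈ V, dist x x₀ ≤ ρ → ∀ w ∈ nonnegCone v, ‖w‖ ≤ 2 * ρ → x - w ∈ V := by
  -- chosen so that `ρ + 2 * (‖x₀‖ * (2 * ρ) / m) = m / 4`
  set ρ := m ^ 2 / (4 * (m + 4 * ‖x₀‖))
  have hρ : 0 < ρ := by positivity
  refine ⟨ρ, hρ, fun x hx hxρ w hw hwρ => ?_⟩
  obtain ⟨c, hc, rfl⟩ := mem_nonnegCone.1 hw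
  refine sub_sum_smul_mem hv (fun j x hx c hc h => sub_smul_mem_of_dist_le (hV j) (hv j) (hvx j)
    hx hc h) hc Finset.univ x hx ?_
  have hsum : m * ∑ j, c j ≤ ‖x₀‖ * (2 * ρ) :=
    (mul_sum_le_inner_sum_smul hvx hc).trans
      ((real_inner_le_norm _ _).trans (mul_le_mul_of_nonneg_left hwρ (norm_nonneg _)))
  have hρm : ρ * (m + 4 * ‖x₀‖) = m ^ 2 / 4 := by
    simp only [ρ]; field_simp
  rw [← mul_le_mul_iff_of_pos_left hm]
  nlinarith

end Descent

section Directions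

variable {d : ℕ}

lemma smul_single_one (i : Fin d) (a : ℝ) :
    a • EuclideanSpace.single i (1 : ℝ) = EuclideanSpace.single i a := by
  ext k; simp [PiLp.single_apply]

lemma exists_dirNE_single_mem_span (hd : 2 ≤ d) (i : Fin d) (a : ℝ) :
    ∃ e ∈ dirNE d, EuclideanSpace.single i a ∈ ℝ ∙ e := by
  obtain ⟨j, hj⟩ : ∃ j : Fin d, j ≠ i :=
    Fintype.exists_ne_of_one_lt_card (by rw [Fintype.card_fin]; omega) i
  exact ⟨_, ⟨i, j, hj.symm, Or.inl rfl⟩, Submodule.mem_span_singleton.2 ⟨a, smul_single_one i a⟩⟩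

lemma exists_dirNE_single_add_single_mem_span {i j : Fin d} (hij : i ≠ j) {a b : ℝ}
    (hb : b = a ∨ b = -a) :
    ∃ e ∈ dirNE d, EuclideanSpace.single i a + EuclideanSpace.single j b ∈ ℝ ∙ e := by
  rcases hb with rfl | rfl
  · refine ⟨_, ⟨i, j, hij, Or.inr (Or.inl rfl)⟩, Submodule.mem_span_singleton.2 ⟨b, ?_⟩⟩
    rw [smul_add, smul_single_one, smul_single_one]
  · refine ⟨_, ⟨i, j, hij, Or.inr (Or.inr rfl)⟩, Submodule.mem_span_singleton.2 ⟨a, ?_⟩⟩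
    rw [smul_sub, smul_single_one, smul_single_one, sub_eq_add_neg, ← smul_single_one j (-a),
      neg_smul, smul_single_one]

lemma exists_spanning_directions (hd : 2 ≤ d) {x₀ : EuclideanSpace ℝ (Fin d)} (hx₀ : x₀ ≠ 0) :
    ∃ v : Fin d → EuclideanSpace ℝ (Fin d), (∀ j, ∃ e ∈ dirNE d, v j ∈ ℝ ∙ e) ∧
      (∀ j, ‖v j‖ ≤ 2) ∧ Submodule.span ℝ (range v) = ⊤ ∧ ∃ m > 0, ∀ j, m ≤ ⟪x₀, v j⟫ := by
  obtain ⟨i, hi⟩ : ∃ i, x₀ i ≠ 0 := by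
    by_contra! h
    exact hx₀ (PiLp.ext h)
  set s : Fin d → ℝ := fun j => if 0 ≤ x₀ j then 1 else -1
  have hs : ∀ j, s j = 1 ∨ s j = -1 := fun j => by by_cases h : 0 ≤ x₀ j <;> simp [s, h]
  set b : Fin d → EuclideanSpace ℝ (Fin d) := fun j => EuclideanSpace.single j (s j)
  have hb_norm : ∀ j, ‖b j‖ = 1 := fun j => by rcases hs j with h | h <;> simp [b, h]
  have hb_inner : ∀ j, ⟪x₀, b j⟫ = |x₀ j| := fun j => by
    by_cases h : 0 ≤ x₀ j
    · simp [b, s, EuclideanSpace.inner_single_right, h, abs_of_nonneg h]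
    · simp [b, s, EuclideanSpace.inner_single_right, h, abs_of_neg (not_le.1 h)]
  set v : Fin d → EuclideanSpace ℝ (Fin d) := fun j => if j = i then b i else b i + b j
  have hb_span : ∀ j, b j ∈ Submodule.span ℝ (range v) := fun j => by
    by_cases hj : j = i
    · subst hj; exact Submodule.subset_span ⟨j, by simp [v]⟩
    · have hsub := sub_mem (Submodule.subset_span (R := ℝ) (mem_range_self (f := v) j))
        (Submodule.subset_span (mem_range_self (f := v) i))
      simpa [v, hj] using hsub
  refine ⟨v, fun j => ?_, fun j => ?_, ?_, |x₀ i|, abs_pos.2 hi, fun j => ?_⟩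
  · by_cases hj : i = j
    · simpa [v, hj] using exists_dirNE_single_mem_span hd j (s j)
    · simpa [v, Ne.symm hj] using exists_dirNE_single_add_single_mem_span hj
        (by rcases hs i with h | h <;> rcases hs j with h' | h' <;> simp [h, h'])
  · by_cases hj : j = i
    · simp [v, hj, hb_norm]
    · simpa [v, hj, hb_norm, one_add_one_eq_two] using norm_add_le (b i) (b j)
  · refine eq_top_iff.2 ?_
    rw [← (EuclideanSpace.basisFun (Fin d) ℝ).toBasis.span_eq, Submodule.span_le]
    rintro _ ⟨j, rfl⟩
    have hsb : s j • b j = EuclideanSpace.single j 1 := by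
      rcases hs j with h | h <;> ext k <;> by_cases hk : k = j <;> simp [b, h, hk]
    simpa [hsb] using Submodule.smul_mem _ (s j) (hb_span j)
  · by_cases hj : j = i
    · simp [v, hj, hb_inner]
    · simp [v, hj, inner_add_right, hb_inner]

end Directions

theorem stmt11_general {d : ℕ} (hd : 2 ≤ d)
    (u₀ : EuclideanSpace ℝ (Fin d) → ℝ)
    (c₀ : ℝ) (hc₀ : 0 < c₀)
    (hball : {x : EuclideanSpace ℝ (Fin d) | 0 < ‖x‖ ∧ ‖x‖ ≤ c₀} ⊆ {x | 0 < u₀ x})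
    (hmono : ∀ e ∈ dirNE d, ∀ x1 x2 : EuclideanSpace ℝ (Fin d),
      x1 ≠ 0 → x2 ≠ 0 → (∃ t : ℝ, t ≠ 0 ∧ x1 - x2 = t • e) →
      ‖x1‖ ≤ ‖x2‖ → u₀ x2 ≤ u₀ x1) :
    ∀ x0 ∈ frontier (closure {x | 0 < u₀ x}),
      ∃ (r L : ℝ) (ν : EuclideanSpace ℝ (Fin d)), 0 < r ∧ 0 < L ∧ ‖ν‖ = 1 ∧
        ∃ g : (ℝ ∙ ν)ᗮ → ℝ,
          (∀ y1 y2 : (ℝ ∙ ν)ᗮ, |g y1 - g y2| ≤ L * ‖(y1 : EuclideanSpace ℝ (Fin d)) - y2‖) ∧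
          closure {x | 0 < u₀ x} ∩ Metric.ball x0 r =
            {z : EuclideanSpace ℝ (Fin d) |
              ∃ (y : (ℝ ∙ ν)ᗮ) (t : ℝ), t ≤ g y ∧
                z = (y : EuclideanSpace ℝ (Fin d)) + t • ν} ∩ Metric.ball x0 r := by
  intro x0 hx0
  have : Nonempty (Fin d) := ⟨⟨0, by omega⟩⟩
  have hball0 : ball 0 c₀ ⊆ closure {x | 0 < u₀ x} := ball_zero_subset_closure hball
  have h0 : (0 : EuclideanSpace ℝ (Fin d)) ∈ closure {x | 0 < u₀ x} := hball0 (mem_ball_self hc₀)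
  have hx0ne : x0 ≠ 0 := by
    rintro rfl
    exact hx0.2 (interior_maximal hball0 isOpen_ball (mem_ball_self hc₀))
  obtain ⟨v, hvN, hv, hspan, m, hm, hvx⟩ := exists_spanning_directions hd hx0ne
  have hVv : ∀ j, ∀ x ∈ closure {x | 0 < u₀ x}, ∀ a : ℝ,
      ‖x + a • v j‖ ≤ ‖x‖ → x + a • v j ∈ closure {x | 0 < u₀ x} := fun j x hx a ha => by
    obtain ⟨e, he, hve⟩ := hvN j
    exact add_mem_closure_of_norm_le (hmono e he) h0 hx (Submodule.smul_mem _ a hve) ha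
  obtain ⟨ρ, hρ, hdown⟩ := exists_forall_sub_mem_of_mem_nonnegCone hm hvx hv hVv
  obtain ⟨ε, hε, hK⟩ := exists_closedBall_subset_nonnegCone hspan
  have hx0ν : 0 < ⟪x0, ∑ j, v j⟫ := by
    rw [inner_sum]
    exact Finset.sum_pos (fun j _ => hm.trans_le (hvx j)) Finset.univ_nonempty
  have hν : ∑ j, v j ≠ 0 := by rintro h; simp [h] at hx0ν
  obtain ⟨g, hg, hgraph⟩ := exists_lipschitz_subgraph_of_cone isClosed_closure
    (isClosed_closure.frontier_subset hx0) (norm_smul_inv_norm hν) (by positivity)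
    (smul_closedBall_subset_pointedCone hε.le (by positivity) hK)
    (fun w => inner_nonneg_of_mem_nonnegCone fun j => hm.le.trans (hvx j))
    (by rw [real_inner_smul_right]; positivity) hρ hdown
  exact ⟨ρ / 2, _, _, by positivity, by positivity, norm_smul_inv_norm hν, g, hg, hgraph⟩

/-- Lipschitz regularity of the free boundary. Let `d ≥ 2` and let
`u₀ : ℝ^d → [0,∞)` be continuous on `ℝ^d ∖ {0}`, with bounded support, such that
(i) `{0 < |x| ≤ c₀} ⊆ {u₀ > 0}` for some `c₀ > 0`, and (ii) `u₀` is monotone along all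
directions of `𝒩`: for `x¹ - x²` a nonzero multiple of `e ∈ 𝒩`, `|x¹| ≤ |x²|` implies
`u₀(x¹) ≥ u₀(x²)`. Let `V₀` be the support (closure of `{u₀ > 0}`). Then `∂V₀` is
locally a Lipschitz graph: for every `x⁰ ∈ ∂V₀` there are `r, L > 0`, a unit vector
`ν`, and an `L`-Lipschitz function `g : ν^⊥ → ℝ` such that
`V₀ ∩ B(x⁰, r) = {y + t·ν : y ∈ ν^⊥, t ≤ g(y)} ∩ B(x⁰, r)`. -/
theorem stmt11 {d : ℕ} (hd : 2 ≤ d)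
    (u₀ : EuclideanSpace ℝ (Fin d) → ℝ)
    (hcont : ContinuousOn u₀ {x | x ≠ 0})
    (hnonneg : ∀ x, 0 ≤ u₀ x)
    (hbdd : Bornology.IsBounded (Function.support u₀))
    (c₀ : ℝ) (hc₀ : 0 < c₀)
    (hball : {x : EuclideanSpace ℝ (Fin d) | 0 < ‖x‖ ∧ ‖x‖ ≤ c₀} ⊆ {x | 0 < u₀ x})
    (hmono : ∀ e ∈ dirNE d, ∀ x1 x2 : EuclideanSpace ℝ (Fin d),
      x1 ≠ 0 → x2 ≠ 0 → (∃ t : ℝ, t ≠ 0 ∧ x1 - x2 = t • e) →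
      ‖x1‖ ≤ ‖x2‖ → u₀ x2 ≤ u₀ x1) :
    ∀ x0 ∈ frontier (closure {x | 0 < u₀ x}),
      ∃ (r L : ℝ) (ν : EuclideanSpace ℝ (Fin d)), 0 < r ∧ 0 < L ∧ ‖ν‖ = 1 ∧
        ∃ g : (ℝ ∙ ν)ᗮ → ℝ,
          (∀ y1 y2 : (ℝ ∙ ν)ᗮ, |g y1 - g y2| ≤ L * ‖(y1 : EuclideanSpace ℝ (Fin d)) - y2‖) ∧
          closure {x | 0 < u₀ x} ∩ Metric.ball x0 r =
            {z : EuclideanSpace ℝ (Fin d) |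
              ∃ (y : (ℝ ∙ ν)ᗮ) (t : ℝ), t ≤ g y ∧
                z = (y : EuclideanSpace ℝ (Fin d)) + t • ν} ∩ Metric.ball x0 r :=
  stmt11_general hd u₀ c₀ hc₀ hball hmono

end LipschitzFB
end
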